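/- arXiv:1009.3532 — 8 statements merged into one kernel-verified Lean document; each statement's English description precedes it below -/
import Mathlib

section
/- Let a group G act on a fine graph K with finite edge stabilizers. Then for any two distinct vertices u and v of K lying in the same connected component, the intersection of the stabilizers G_u ∩ G_v is finite. -/
open SimpleGraph

universe u v

variable {V : Type u} {G : Type v}

/-- A graph is fine if each edge lies in only finitely many circuits (embedded
cycles) of length `n`, for every `n`. -/
def Fine (K : SimpleGraph V) : Prop :=
  ∀ (n : ℕ) (u w : V), K.Adj u w →
    {c : K.Walk u u | c.IsCycle ∧ c.length = n ∧ s(u, w) ∈ c.edges}.Finite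

/-- An action of `G` by permutations of `V` preserves the graph `K`. -/
def ActsOn [Group G] (φ : G →* Equiv.Perm V) (K : SimpleGraph V) : Prop :=
  ∀ (g : G) (u w : V), K.Adj u w → K.Adj (φ g u) (φ g w)

/-- The stabilizer of a vertex. -/
def stab [Group G] (φ : G →* Equiv.Perm V) (x : V) : Subgroup G where
  carrier := {g | φ g x = x}
  one_mem' := by simp
  mul_mem' := by
    intro a b ha hb
    simp only [Set.mem_setOf_eq, map_mul, Equiv.Perm.mul_apply] at *
    rw [hb, ha]
  inv_mem' := by
    intro a ha
    simp only [Set.mem_setOf_eq, map_inv] at *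
    conv_lhs => rw [← ha]
    simp

/-- The conjugate subgroup `g P g⁻¹`. -/
def conjSub [Group G] (g : G) (P : Subgroup G) : Subgroup G :=
  Subgroup.map (MulAut.conj g).toMonoidHom P

/-- All edge stabilizers are finite (we use pointwise stabilizers of the two
endpoints; the actions considered are without inversions). -/
def FiniteEdgeStabs [Group G] (φ : G →* Equiv.Perm V) (K : SimpleGraph V) : Prop :=
  ∀ u w : V, K.Adj u w → ((stab φ u ⊓ stab φ w : Subgroup G) : Set G).Finite

/-- There are finitely many `G`-orbits of edges. -/
def FinEdgeOrbits [Group G] (φ : G →* Equiv.Perm V) (K : SimpleGraph V) : Prop :=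
  ∃ F : Set (V × V), F.Finite ∧
    ∀ u w : V, K.Adj u w → ∃ g : G, ∃ p ∈ F, φ g p.1 = u ∧ φ g p.2 = w

/-- Gromov hyperbolicity of the path metric of a graph (four point condition). -/
def Hyperbolic (K : SimpleGraph V) : Prop :=
  ∃ δ : ℝ, ∀ x y z t : V,
    (K.dist x y : ℝ) + (K.dist z t : ℝ) ≤
      max ((K.dist x z : ℝ) + (K.dist y t : ℝ)) ((K.dist x t : ℝ) + (K.dist y z : ℝ)) + δ

/-- `K` is a `(G, P)`-graph witnessing that `G` is hyperbolic relative to the finite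
collection `Ps` of subgroups: `K` is a connected fine hyperbolic graph, `G` acts
on it without inversions with finite edge stabilizers and finitely many orbits of
edges, and `Ps` is a set of representatives of the distinct conjugacy classes of
vertex stabilizers, with every infinite vertex stabilizer represented. -/
structure IsGPGraph [Group G] (φ : G →* Equiv.Perm V) (Ps : Set (Subgroup G))
    (K : SimpleGraph V) : Prop where
  finP : Ps.Finite
  conn : K.Connected
  fine : Fine K
  hyp : Hyperbolic K
  acts : ActsOn φ K
  noInv : ∀ (g : G) (u w : V), K.Adj u w → φ g u = w → φ g w ≠ u
  finStabs : FiniteEdgeStabs φ K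
  finOrbits : FinEdgeOrbits φ K
  parab : ∀ x : V, ¬ ((stab φ x : Set G)).Finite →
    ∃ P ∈ Ps, ∃ g : G, stab φ x = conjSub g P
  reps : ∀ P ∈ Ps, ∃ x : V, stab φ x = P
  distinct : ∀ P ∈ Ps, ∀ Q ∈ Ps, (∃ g : G, conjSub g P = Q) → P = Q

/-!
Fix a path from `u` to `v` whose first edge is `u x`. An element of `G_u ∩ G_v` moves `x` to a
neighbour of `u` that is joined to `v` by a walk of the same length avoiding `u`. Fineness
allows only finitely many such neighbours: any two of them close up, through the edge `u x`,
into a circuit of bounded length, and the circuit remembers the neighbour. So `x` has a finite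
orbit under `G_u ∩ G_v`, and its stabilizer there lies in the finite edge stabilizer `G_u ∩ G_x`.
-/

lemma finite_of_finite_orbit_of_finite_stab [Group G] (φ : G →* Equiv.Perm V) (H : Subgroup G)
    (x : V) (horbit : ((fun g => φ g x) '' H).Finite)
    (hstab : ((H ⊓ stab φ x : Subgroup G) : Set G).Finite) : (H : Set G).Finite := by
  refine Set.Finite.of_finite_fibers _ horbit ?_
  rintro _ ⟨g₀, hg₀, rfl⟩
  refine (hstab.image (g₀ * ·)).subset ?_
  rintro g ⟨hg, hgx : φ g x = φ g₀ x⟩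
  refine ⟨g₀⁻¹ * g, ⟨H.mul_mem (H.inv_mem hg₀) hg, ?_⟩, mul_inv_cancel_left g₀ g⟩
  change φ (g₀⁻¹ * g) x = x
  rw [map_mul, map_inv, Equiv.Perm.mul_apply, hgx]
  exact (φ g₀).symm_apply_apply x

lemma ActsOn.exists_walk_map [Group G] {φ : G →* Equiv.Perm V} {K : SimpleGraph V}
    (hacts : ActsOn φ K) (g : G) {x y : V} (q : K.Walk x y) :
    ∃ q' : K.Walk (φ g x) (φ g y), q'.length = q.length ∧ q'.support = q.support.map (φ g) :=
  let f : K →g K := ⟨φ g, hacts g _ _⟩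
  ⟨q.map f, q.length_map f, q.support_map f⟩

namespace SimpleGraph

variable {K : SimpleGraph V}

lemma exists_isCycle_snd_eq [DecidableEq V] {a b x w : V} (hx : K.Adj a x) (hw : K.Adj a w)
    (hxw : x ≠ w) (qx : K.Walk x b) (qw : K.Walk w b) (hax : a ∉ qx.support)
    (haw : a ∉ qw.support) :
    ∃ c : K.Walk a a, c.IsCycle ∧ c.snd = x ∧ s(a, w) ∈ c.edges ∧
      c.length ≤ qx.length + qw.length + 2 := by
  obtain ⟨r, hr, har, hlen⟩ : ∃ r : K.Walk x w, r.IsPath ∧ a ∉ r.support ∧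
      r.length ≤ qx.length + qw.length := by
    refine ⟨_, (qx.append qw.reverse).bypass_isPath, fun ha => ?_, ?_⟩
    · have := (qx.append qw.reverse).support_bypass_subset_support ha
      simp_all [Walk.mem_support_append_iff]
    · simpa using (qx.append qw.reverse).length_bypass_le_length
  refine ⟨.cons hx (r.concat hw.symm), ?_, Walk.snd_cons _ _, by simp [Sym2.eq_swap],
    by simp only [Walk.length_cons, Walk.length_concat]; omega⟩
  refine (Walk.cons_isCycle_iff _ _).mpr ⟨hr.concat har _, fun he => ?_⟩
  rw [Walk.edges_concat, List.concat_eq_append, List.mem_append, List.mem_singleton] at he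
  rcases he with he | he
  · exact har (r.fst_mem_support_of_mem_edges he)
  · rcases Sym2.eq_iff.mp he with ⟨-, hxa⟩ | ⟨-, hxw'⟩
    exacts [hx.ne hxa.symm, hxw hxw']

end SimpleGraph

lemma Fine.setOf_adj_exists_walk_finite {K : SimpleGraph V} (hfine : Fine K) (a b : V) (n : ℕ) :
    {x | K.Adj a x ∧ ∃ q : K.Walk x b, q.length ≤ n ∧ a ∉ q.support}.Finite := by
  classical
  set S := {x | K.Adj a x ∧ ∃ q : K.Walk x b, q.length ≤ n ∧ a ∉ q.support}
  rcases S.eq_empty_or_nonempty with hS | ⟨w, hw, qw, hqw, haw⟩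
  · simp [hS]
  let cycles := ⋃ m ∈ Finset.range (2 * n + 3),
    {c : K.Walk a a | c.IsCycle ∧ c.length = m ∧ s(a, w) ∈ c.edges}
  have hcycles : cycles.Finite :=
    Set.Finite.biUnion (Finset.range _).finite_toSet fun m _ => hfine m a w hw
  refine ((hcycles.image Walk.snd).insert w).subset ?_
  rintro x ⟨hx, qx, hqx, hax⟩
  rcases eq_or_ne x w with rfl | hxw
  · exact Set.mem_insert _ _
  obtain ⟨c, hc, hcx, hcw, hlen⟩ := exists_isCycle_snd_eq hx hw hxw qx qw hax haw
  refine Set.mem_insert_of_mem _ ⟨c, ?_, hcx⟩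
  simp only [cycles, Set.mem_iUnion, Set.mem_ofPred_eq, Finset.mem_range]
  exact ⟨_, by omega, hc, rfl, hcw⟩

/-- If `G` acts on a fine graph `K` with finite edge stabilizers, then the
intersection of the stabilizers of two distinct vertices in the same connected
component is finite. -/
theorem stabilizer_inter_finite_of_fine [Group G] (φ : G →* Equiv.Perm V)
    (K : SimpleGraph V) (hfine : Fine K) (hacts : ActsOn φ K)
    (hstabs : FiniteEdgeStabs φ K) (u v : V) (hne : u ≠ v)
    (hreach : K.Reachable u v) :
    ((stab φ u ⊓ stab φ v : Subgroup G) : Set G).Finite := by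
  obtain ⟨x, hux, q, huq⟩ : ∃ x, K.Adj u x ∧ ∃ q : K.Walk x v, u ∉ q.support := by
    obtain ⟨p, hp⟩ := hreach.exists_isPath
    cases p with
    | nil => exact absurd rfl hne
    | cons hux q => exact ⟨_, hux, q, (Walk.cons_isPath_iff _ _ |>.mp hp).2⟩
  refine finite_of_finite_orbit_of_finite_stab φ _ x ?_
    ((hstabs u x hux).subset (inf_le_inf_right _ inf_le_left))
  refine (hfine.setOf_adj_exists_walk_finite u v q.length).subset ?_
  rintro _ ⟨g, ⟨hgu : φ g u = u, hgv : φ g v = v⟩, rfl⟩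
  obtain ⟨q', hlen, hsupp⟩ := hacts.exists_walk_map g q
  refine ⟨hgu ▸ hacts g u x hux, q'.copy rfl hgv, by simp [hlen], ?_⟩
  rw [Walk.support_copy, hsupp, List.mem_map]
  rintro ⟨y, hy, hgy⟩
  exact huq (((φ g).injective (hgy.trans hgu.symm)) ▸ hy)
end

section
/- Let G be hyperbolic relative to P, and let K₂ ↪ K₁ be a G-equivariant simplicial embedding of (G,P)-graphs. Then every vertex of K₁ of infinite valence lies in (the image of) K₂. -/
open SimpleGraph

universe u v

variable {V : Type u} {G : Type v}

/-! An infinite-valence vertex `v` of `K₁` has an infinite stabilizer, since its edges fall into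
finitely many `G`-orbits. That stabilizer is conjugate to some `P ∈ Ps`, hence is the stabilizer
of a vertex `y` of `K₂`, so it fixes both `v` and `f y`.

In a connected fine graph with finite edge stabilizers an infinite group `H` fixes at most one
vertex. If it fixes `a ≠ b`, let `a, w, …, b` be a geodesic. Translating its tail by `h ∈ H` and
returning along it gives a path of bounded length from `h w` to `w` avoiding `a`; by fineness only
finitely many neighbours of `a` admit such paths, so some `h w` has an infinite stabilizer in `H`,
and induction on the distance gives `h w = b`. Then `a b` is an edge fixed by `H`. -/

section Graphs

variable {W : Type*} {K : SimpleGraph V} {K' : SimpleGraph W}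

lemma SimpleGraph.Hom.edist_le (f : K →g K') (a b : V) : K'.edist (f a) (f b) ≤ K.edist a b :=
  le_iInf fun p => (SimpleGraph.edist_le (p.map f)).trans (by simp)

lemma SimpleGraph.Iso.dist_eq (e : K ≃g K') (a b : V) : K'.dist (e a) (e b) = K.dist a b := by
  have hle : K'.edist (e a) (e b) ≤ K.edist a b := e.toHom.edist_le a b
  have hge : K.edist a b ≤ K'.edist (e a) (e b) := by
    simpa using e.symm.toHom.edist_le (e a) (e b)
  simp only [SimpleGraph.dist, le_antisymm hle hge]

lemma SimpleGraph.Walk.isCycle_cons_concat {a w w' : V} (ha' : K.Adj a w') (ha : K.Adj w a)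
    (hne : w' ≠ w) {p : K.Walk w' w} (hp : p.IsPath) (hap : a ∉ p.support) :
    (Walk.cons ha' (p.concat ha)).IsCycle := by
  simp only [Walk.cons_isCycle_iff, Walk.edges_concat, List.concat_eq_append, List.mem_append,
    List.mem_singleton, not_or]
  refine ⟨hp.concat hap ha, fun he => hap (p.fst_mem_support_of_mem_edges he), ?_⟩
  rw [Sym2.eq_iff]
  rintro (⟨rfl, -⟩ | ⟨-, rfl⟩)
  exacts [ha.ne rfl, hne rfl]

lemma Fine.finite_setOf_isCycle_length_le (hK : Fine K) {a w : V} (h : K.Adj a w) (n : ℕ) :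
    {c : K.Walk a a | c.IsCycle ∧ c.length ≤ n ∧ s(a, w) ∈ c.edges}.Finite := by
  refine ((Set.finite_Iic n).biUnion fun m _ => hK m a w h).subset ?_
  rintro c ⟨hc, hlen, he⟩
  exact Set.mem_biUnion (Set.mem_Iic.mpr hlen) ⟨hc, rfl, he⟩

/-- Local finiteness of links in a fine graph. -/
lemma Fine.finite_setOf_adj_walk_avoiding (hK : Fine K) {a w : V} (h : K.Adj a w) (n : ℕ) :
    {w' | K.Adj a w' ∧ ∃ p : K.Walk w' w, a ∉ p.support ∧ p.length ≤ n}.Finite := by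
  classical
  refine (((hK.finite_setOf_isCycle_length_le h (n + 2)).image (·.getVert 1)).insert w).subset ?_
  rintro w' ⟨ha', p, hap, hlen⟩
  rcases eq_or_ne w' w with rfl | hne
  · exact Set.mem_insert _ _
  refine Set.mem_insert_of_mem _ ⟨.cons ha' (p.bypass.concat h.symm), ⟨?_, ?_, ?_⟩, by simp⟩
  · exact Walk.isCycle_cons_concat ha' h.symm hne p.bypass_isPath
      fun ha => hap (p.support_bypass_subset_support ha)
  · have := p.length_bypass_le_length
    simp only [Walk.length_cons, Walk.length_concat]
    omega
  · simp [Walk.edges_concat, Sym2.eq_swap]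

end Graphs

section Actions

variable [Group G] {φ : G →* Equiv.Perm V} {K : SimpleGraph V}

lemma mem_stab {g : G} {x : V} : g ∈ stab φ x ↔ φ g x = x := Iff.rfl

lemma stab_apply_eq_conjSub (φ : G →* Equiv.Perm V) (g : G) (x : V) :
    stab φ (φ g x) = conjSub g (stab φ x) := by
  ext k
  simp only [mem_stab, conjSub, Subgroup.mem_map, MulEquiv.coe_toMonoidHom, MulAut.conj_apply]
  constructor
  · intro hk
    refine ⟨g⁻¹ * k * g, ?_, by group⟩
    simp [hk]
  · rintro ⟨l, hl, rfl⟩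
    simp [hl]

lemma stab_le_stab_of_equivariant {W : Type*} {ψ : G →* Equiv.Perm W} {f : W → V}
    (hf : ∀ (g : G) (y : W), f (ψ g y) = φ g (f y)) (y : W) : stab ψ y ≤ stab φ (f y) :=
  fun g hg => by rw [mem_stab, ← hf, mem_stab.mp hg]

/-- The elements of `H` carrying `x` to `y` form a right coset of `H ⊓ stab φ y`. -/
lemma finite_setOf_mem_apply_eq {H : Subgroup G} {y : V}
    (hfin : ((H ⊓ stab φ y : Subgroup G) : Set G).Finite) (x : V) :
    {g | g ∈ H ∧ φ g x = y}.Finite := by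
  rcases Set.eq_empty_or_nonempty {g | g ∈ H ∧ φ g x = y} with hempty | ⟨g₀, hg₀H, hg₀⟩
  · simp [hempty]
  refine (hfin.image (· * g₀)).subset fun g ⟨hgH, hg⟩ => ?_
  refine ⟨g * g₀⁻¹, Subgroup.mem_inf.mpr ⟨mul_mem hgH (inv_mem hg₀H), ?_⟩, inv_mul_cancel_right g g₀⟩
  have hx : (φ g₀)⁻¹ y = x := by simp [← hg₀]
  rw [mem_stab, map_mul, map_inv, Equiv.Perm.mul_apply, hx, hg]

lemma exists_infinite_inf_stab_of_finite_orbit {H : Subgroup G} (hH : (H : Set G).Infinite)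
    {x : V} (horb : ((fun g => φ g x) '' H).Finite) :
    ∃ h ∈ H, ((H ⊓ stab φ (φ h x) : Subgroup G) : Set G).Infinite := by
  by_contra! hfin
  have hcover : (H : Set G) ⊆ ⋃ y ∈ (fun g => φ g x) '' H, {g | g ∈ H ∧ φ g x = y} :=
    fun g hg => Set.mem_biUnion ⟨g, hg, rfl⟩ ⟨hg, rfl⟩
  refine hH ((horb.biUnion fun y hy => ?_).subset hcover)
  obtain ⟨h, hh, rfl⟩ := hy
  exact finite_setOf_mem_apply_eq (hfin h hh) x

lemma FinEdgeOrbits.infinite_stab_of_infinite_neighborSet (ho : FinEdgeOrbits φ K) {v : V}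
    (hv : (K.neighborSet v).Infinite) : (stab φ v : Set G).Infinite := by
  obtain ⟨F, hF, horb⟩ := ho
  intro hfin
  have hfin' : ((⊤ ⊓ stab φ v : Subgroup G) : Set G).Finite := by rwa [top_inf_eq]
  refine hv ((hF.biUnion fun p _ =>
    (finite_setOf_mem_apply_eq hfin' p.1).image fun g => φ g p.2).subset fun u hu => ?_)
  obtain ⟨g, p, hp, h₁, h₂⟩ := horb v u hu
  exact Set.mem_biUnion hp ⟨g, ⟨Subgroup.mem_top g, h₁⟩, h₂⟩

def ActsOn.iso (ha : ActsOn φ K) (g : G) : K ≃g K where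
  toEquiv := φ g
  map_rel_iff' := ⟨fun h => by simpa using ha g⁻¹ _ _ h, ha g _ _⟩

lemma ActsOn.exists_walk_apply (ha : ActsOn φ K) (g : G) {x y : V} (q : K.Walk x y) :
    ∃ r : K.Walk (φ g x) (φ g y), r.length = q.length ∧ r.support = q.support.map (φ g) :=
  ⟨q.map (ha.iso g).toHom, Walk.length_map _ _, Walk.support_map _ _⟩

lemma ActsOn.dist_apply (ha : ActsOn φ K) (g : G) (a b : V) :
    K.dist (φ g a) (φ g b) = K.dist a b :=
  (ha.iso g).dist_eq a b

theorem eq_of_le_stab (hc : K.Connected) (hK : Fine K) (ha : ActsOn φ K)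
    (hs : FiniteEdgeStabs φ K) {H : Subgroup G} (hH : (H : Set G).Infinite) {a b : V}
    (hHa : H ≤ stab φ a) (hHb : H ≤ stab φ b) : a = b := by
  induction hd : K.dist a b using Nat.strong_induction_on generalizing a H with
  | _ d ih =>
  obtain ⟨p, hp, hlen⟩ := hc.exists_path_of_dist a b
  cases p with
  | nil => rfl
  | @cons _ w _ haw q =>
  have haq : a ∉ q.support := ((Walk.cons_isPath_iff haw q).mp hp).2
  have hqd : K.dist w b < d := (dist_le q).trans_lt (by simp at hlen; omega)
  have hadj : ∀ g ∈ H, K.Adj a (φ g w) := fun g hg => by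
    simpa [mem_stab.mp (hHa hg)] using ha g a w haw
  have horb : ((fun g => φ g w) '' H).Finite := by
    refine (hK.finite_setOf_adj_walk_avoiding haw (2 * q.length)).subset ?_
    rintro _ ⟨g, hg, rfl⟩
    have hga : φ g a = a := hHa hg
    have hgb : φ g b = b := hHb hg
    obtain ⟨r, hrlen, hrsupp⟩ := ha.exists_walk_apply g q
    refine ⟨hadj g hg, (r.copy rfl hgb).append q.reverse, ?_, ?_⟩
    · simp only [Walk.mem_support_append_iff, Walk.support_copy, hrsupp, List.mem_map,
        Walk.support_reverse, List.mem_reverse, not_or, not_exists, not_and]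
      refine ⟨fun x hx hxa => haq ?_, haq⟩
      rwa [← (φ g).injective (hxa.trans hga.symm)]
    · simp only [Walk.length_append, Walk.length_copy, hrlen, Walk.length_reverse]
      omega
  obtain ⟨g, hg, hinf⟩ := exists_infinite_inf_stab_of_finite_orbit hH horb
  have hgw : φ g w = b := ih _ (by rwa [← hHb hg, ha.dist_apply]) hinf inf_le_right
    (inf_le_left.trans hHb) rfl
  have hab : K.Adj a b := hgw ▸ hadj g hg
  exact absurd ((hs a b hab).subset fun k hk => Subgroup.mem_inf.mpr ⟨hHa hk, hHb hk⟩) hH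

end Actions

theorem infinite_valence_vertex_mem_image_general {V₁ : Type u} {V₂ : Type*} [Group G]
    (φ₁ : G →* Equiv.Perm V₁) (φ₂ : G →* Equiv.Perm V₂)
    (Ps : Set (Subgroup G)) (K₁ : SimpleGraph V₁) (K₂ : SimpleGraph V₂)
    (hK₁ : IsGPGraph φ₁ Ps K₁) (hK₂ : IsGPGraph φ₂ Ps K₂)
    (f : V₂ → V₁)
    (hequiv : ∀ (g : G) (x : V₂), f (φ₂ g x) = φ₁ g (f x)) :
    ∀ v : V₁, (K₁.neighborSet v).Infinite → v ∈ Set.range f := by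
  intro v hv
  have hstab := hK₁.finOrbits.infinite_stab_of_infinite_neighborSet hv
  obtain ⟨P, hP, g, hPv⟩ := hK₁.parab v hstab
  obtain ⟨x, hx⟩ := hK₂.reps P hP
  have hle : stab φ₁ v ≤ stab φ₁ (f (φ₂ g x)) := by
    rw [hPv, ← hx, ← stab_apply_eq_conjSub]
    exact stab_le_stab_of_equivariant hequiv _
  exact ⟨φ₂ g x, (eq_of_le_stab hK₁.conn hK₁.fine hK₁.acts hK₁.finStabs hstab le_rfl hle).symm⟩

/-- If `K₂ ↪ K₁` is a `G`-equivariant simplicial embedding of `(G,Ps)`-graphs,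
then every infinite-valence vertex of `K₁` lies in the image of `K₂`. -/
theorem infinite_valence_vertex_mem_image {V₁ : Type u} {V₂ : Type*} [Group G]
    (φ₁ : G →* Equiv.Perm V₁) (φ₂ : G →* Equiv.Perm V₂)
    (Ps : Set (Subgroup G)) (K₁ : SimpleGraph V₁) (K₂ : SimpleGraph V₂)
    (hK₁ : IsGPGraph φ₁ Ps K₁) (hK₂ : IsGPGraph φ₂ Ps K₂)
    (f : V₂ → V₁) (hinj : Function.Injective f)
    (hadj : ∀ u w : V₂, K₂.Adj u w → K₁.Adj (f u) (f w))
    (hequiv : ∀ (g : G) (x : V₂), f (φ₂ g x) = φ₁ g (f x)) :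
    ∀ v : V₁, (K₁.neighborSet v).Infinite → v ∈ Set.range f :=
  infinite_valence_vertex_mem_image_general φ₁ φ₂ Ps K₁ K₂ hK₁ hK₂ f hequiv
end

section
/- Let G act cocompactly on a connected graph K with finite edge stabilizers, and let K' be obtained from K by G-removal of all translates of a single edge, or by G-removal of all translates of a finite-valence vertex together with its incident edges. Then: (1) if K' is connected, the inclusion K' ⊆ K is a quasi-isometry, so K' is hyperbolic whenever K is; and (2) if K is fine, then K' is fine. -/
/-
Proof idea. The removed edges, resp. vertices, form one `G`-orbit, so rerouting an edge of `K`
through `K'` costs boundedly many steps: for a removed edge `g • e` it costs the `K'`-distance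
between the endpoints of `e`, and around a removed vertex `g • v` the detour joins kept neighbours
of `g • v` or of a removed neighbour of `g • v`; translating back by `g⁻¹`, these are finitely many
pairs of vertices near `v`, as `v` has finite valence. Hence `d_K' ≤ C d_K`, and every vertex lies
within distance `1` of `K'`, so the inclusion is a quasi-isometry. Hyperbolicity passes to `K'`
through the Morse lemma: a geodesic triangle of `K'` is a quasi-geodesic triangle of `K`, hence
close to a geodesic triangle of `K`, which is slim. Circuits of `K'` are circuits of `K`, so `K'`
is fine whenever `K` is.
-/

open SimpleGraph

universe u v

variable {V : Type u} {G : Type v}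

/-- The graph homomorphism induced by the action of `g`. -/
def actHom [Group G] {φ : G →* Equiv.Perm V} {J : SimpleGraph V}
    (h : ActsOn φ J) (g : G) : J →g J where
  toFun := φ g
  map_rel' := fun hadj => h g _ _ hadj

/-- A subgraph is invariant under the action. -/
def InvSubgraph [Group G] (φ : G →* Equiv.Perm V) {J : SimpleGraph V}
    (K : J.Subgraph) : Prop :=
  ∀ g : G, (∀ x ∈ K.verts, φ g x ∈ K.verts) ∧
    ∀ u w : V, K.Adj u w → K.Adj (φ g u) (φ g w)

/-- The inclusion of the subgraph `K` into the subgraph `K'` (with `K ≤ K'`) is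
a quasi-isometry for the combinatorial path metrics. -/
def QISubIncl {J : SimpleGraph V} (K K' : J.Subgraph) (h : K ≤ K') : Prop :=
  ∃ l e : ℝ, 1 ≤ l ∧ 0 ≤ e ∧
    (∀ u w : K.verts,
      (K'.coe.dist ⟨u.1, Set.mem_of_mem_of_subset u.2 (SimpleGraph.Subgraph.verts_mono h)⟩
          ⟨w.1, Set.mem_of_mem_of_subset w.2 (SimpleGraph.Subgraph.verts_mono h)⟩ : ℝ)
        ≤ l * (K.coe.dist u w : ℝ) + e ∧
      (K.coe.dist u w : ℝ)
        ≤ l * (K'.coe.dist ⟨u.1, Set.mem_of_mem_of_subset u.2 (SimpleGraph.Subgraph.verts_mono h)⟩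
            ⟨w.1, Set.mem_of_mem_of_subset w.2 (SimpleGraph.Subgraph.verts_mono h)⟩ : ℝ) + e) ∧
    (∀ x : K'.verts, ∃ u : K.verts,
      (K'.coe.dist x ⟨u.1, Set.mem_of_mem_of_subset u.2 (SimpleGraph.Subgraph.verts_mono h)⟩ : ℝ) ≤ e)

/-- There are finitely many `G`-orbits of vertices. -/
def FinVertOrbits [Group G] (φ : G →* Equiv.Perm V) : Prop :=
  ∃ F : Set V, F.Finite ∧ ∀ v : V, ∃ g : G, ∃ x ∈ F, φ g x = v

namespace SimpleGraph

variable {W : Type*} {X : SimpleGraph V} {Y : SimpleGraph W} {a b m w : V} {C D δ Δ : ℕ}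

open Walk

namespace Walk

lemma exists_isSubwalk_getVert (p : X.Walk a b) {i j : ℕ} (hij : i ≤ j) (hj : j ≤ p.length) :
    ∃ q : X.Walk (p.getVert i) (p.getVert j), q.IsSubwalk p ∧ q.length = j - i := by
  have hend : (p.drop i).getVert (j - i) = p.getVert j := by
    rw [drop_getVert, Nat.add_sub_cancel' hij]
  refine ⟨((p.drop i).take (j - i)).copy rfl hend, ?_, by simp; omega⟩
  simpa using
    ((p.drop i).isSubwalk_take (j - i)).trans (p.isSubwalk_drop i) |>.copy rfl hend rfl rfl

lemma dist_getVert_le (p : X.Walk a b) {i j : ℕ} (hij : i ≤ j) (hj : j ≤ p.length) :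
    X.dist (p.getVert i) (p.getVert j) ≤ j - i := by
  obtain ⟨q, -, hq⟩ := p.exists_isSubwalk_getVert hij hj
  exact hq ▸ dist_le q

lemma dist_getVert_of_length_eq_dist {p : X.Walk a b} (hp : p.length = X.dist a b) {i j : ℕ}
    (hij : i ≤ j) (hj : j ≤ p.length) : X.dist (p.getVert i) (p.getVert j) = j - i := by
  obtain ⟨q, hqp, hq⟩ := p.exists_isSubwalk_getVert hij hj
  rw [← hq, length_eq_dist_of_subwalk hp hqp]

lemma dist_add_dist_of_mem_support {p : X.Walk a b} (hp : p.length = X.dist a b)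
    (hm : m ∈ p.support) : X.dist a m + X.dist m b = X.dist a b := by
  obtain ⟨i, rfl, hi⟩ := mem_support_iff_exists_getVert.mp hm
  have h₁ := dist_getVert_of_length_eq_dist hp (Nat.zero_le i) hi
  have h₂ := dist_getVert_of_length_eq_dist hp hi le_rfl
  rw [getVert_zero] at h₁
  rw [getVert_length] at h₂
  omega

end Walk

lemma Hom.dist_map_le (f : X →g Y) {u v : V} (h : X.Reachable u v) :
    Y.dist (f u) (f v) ≤ X.dist u v := by
  obtain ⟨p, hp⟩ := h.exists_walk_length_eq_dist
  exact hp ▸ (p.length_map f) ▸ dist_le (p.map f)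

lemma Iso.dist_map (e : X ≃g Y) (u v : V) : Y.dist (e u) (e v) = X.dist u v := by
  by_cases h : X.Reachable u v
  · refine le_antisymm (e.toHom.dist_map_le h) ?_
    simpa using e.symm.toHom.dist_map_le ((Iso.reachable_iff (φ := e)).mpr h)
  · rw [dist_eq_zero_of_not_reachable h,
      dist_eq_zero_of_not_reachable (mt (Iso.reachable_iff (φ := e)).mp h)]

lemma Subgraph.dist_top_coe (x y : (⊤ : X.Subgraph).verts) :
    (⊤ : X.Subgraph).coe.dist x y = X.dist x y :=
  (Subgraph.topIso.dist_map x y).symm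

lemma dist_le_mul_dist_of_adj (hY : Y.Connected) (f : V → W) {L : ℕ}
    (hf : ∀ u v, X.Adj u v → Y.dist (f u) (f v) ≤ L) {u v : V} (huv : X.Reachable u v) :
    Y.dist (f u) (f v) ≤ L * X.dist u v := by
  obtain ⟨p, hp⟩ := huv.exists_walk_length_eq_dist
  rw [← hp]
  clear hp huv
  induction p with
  | nil => simp
  | @cons u m w hadj p ih =>
    have := hf _ _ hadj
    have : Y.dist (f u) (f w) ≤ Y.dist (f u) (f m) + Y.dist (f m) (f w) := hY.dist_triangle
    rw [Walk.length_cons, mul_add_one]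
    omega

/-! ### Gromov products and slim triangles -/

/-- Twice the Gromov product `(x · y)_w`, so that it is an integer. -/
noncomputable def gromovProd (X : SimpleGraph V) (w x y : V) : ℤ :=
  X.dist x w + X.dist y w - X.dist x y

def FourPoint (X : SimpleGraph V) (δ : ℕ) : Prop :=
  ∀ x y z t : V, X.dist x y + X.dist z t ≤
    max (X.dist x z + X.dist y t) (X.dist x t + X.dist y z) + δ

def SlimTriangles (X : SimpleGraph V) (Δ : ℕ) : Prop :=
  ∀ ⦃x y z : V⦄ (pxy : X.Walk x y) (pyz : X.Walk y z) (pxz : X.Walk x z),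
    pxy.length = X.dist x y → pyz.length = X.dist y z → pxz.length = X.dist x z →
    ∀ m ∈ pxz.support, ∃ m', (m' ∈ pxy.support ∨ m' ∈ pyz.support) ∧ X.dist m m' ≤ Δ

lemma hyperbolic_iff_exists_fourPoint : Hyperbolic X ↔ ∃ δ, X.FourPoint δ := by
  constructor
  · rintro ⟨δ, hδ⟩
    refine ⟨⌈δ⌉₊, fun x y z t => ?_⟩
    have h : ((X.dist x y + X.dist z t : ℕ) : ℝ) ≤
        ((max (X.dist x z + X.dist y t) (X.dist x t + X.dist y z) + ⌈δ⌉₊ : ℕ) : ℝ) := by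
      push_cast
      linarith [hδ x y z t, Nat.le_ceil δ]
    exact_mod_cast h
  · rintro ⟨δ, hδ⟩
    exact ⟨δ, fun x y z t => by exact_mod_cast hδ x y z t⟩

lemma FourPoint.min_gromovProd_le (h : X.FourPoint δ) (w x y z : V) :
    min (X.gromovProd w x y) (X.gromovProd w y z) ≤ X.gromovProd w x z + δ := by
  have := h x z y w
  rw [dist_comm (u := z) (v := y)] at this
  simp only [gromovProd]
  omega

lemma fourPoint_of_min_gromovProd_le
    (h : ∀ w x y z, min (X.gromovProd w x y) (X.gromovProd w y z) ≤ X.gromovProd w x z + δ) :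
    X.FourPoint δ := by
  intro x y z t
  have := h t x z y
  simp only [gromovProd] at this
  rw [dist_comm (u := z) (v := y)] at this
  omega

lemma FourPoint.exists_gromovProd_succ_le (h : X.FourPoint δ) (w : V) (k : ℕ) :
    ∀ (n : ℕ) (v : ℕ → V), 1 ≤ n → n ≤ 2 ^ k →
      ∃ i < n, X.gromovProd w (v i) (v (i + 1)) ≤ X.gromovProd w (v 0) (v n) + k * δ := by
  induction k with
  | zero =>
    intro n v h₁ h₂
    obtain rfl : n = 1 := by simp at h₂; omega
    exact ⟨0, one_pos, by simp⟩
  | succ k ih =>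
    intro n v h₁ h₂
    rw [pow_succ] at h₂
    obtain rfl | hn := eq_or_lt_of_le h₁
    · exact ⟨0, one_pos, le_add_of_nonneg_right (by positivity)⟩
    set m := n / 2
    obtain ⟨i₁, hi₁, hle₁⟩ := ih m v (by omega) (by omega)
    obtain ⟨i₂, hi₂, hle₂⟩ := ih (n - m) (fun i => v (m + i)) (by omega) (by omega)
    rw [add_zero, Nat.add_sub_cancel' (Nat.div_le_self n 2), ← add_assoc] at hle₂
    have hgp := h.min_gromovProd_le w (v 0) (v m) (v n)
    rcases le_total (X.gromovProd w (v 0) (v m)) (X.gromovProd w (v m) (v n)) with hm | hm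
    · exact ⟨i₁, by omega, by push_cast; linarith [min_eq_left hm]⟩
    · exact ⟨m + i₂, by omega, by push_cast; linarith [min_eq_right hm]⟩

lemma FourPoint.two_mul_le_gromovProd_of_walk (h : X.FourPoint δ) {x y w : V} {r k : ℕ}
    (p : X.Walk x y) (hk : p.length ≤ 2 ^ k) (hfar : ∀ u ∈ p.support, r ≤ X.dist w u) :
    2 * r ≤ X.gromovProd w x y + k * δ + 1 := by
  have hδk : (0 : ℤ) ≤ k * δ := by positivity
  rcases Nat.eq_zero_or_pos p.length with h0 | hpos
  · obtain rfl := Walk.eq_of_length_eq_zero h0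
    have := hfar x p.start_mem_support
    simp only [gromovProd, dist_self, dist_comm (u := x)]
    omega
  obtain ⟨i, hi, hle⟩ := h.exists_gromovProd_succ_le w k p.length p.getVert hpos hk
  rw [p.getVert_zero, p.getVert_length] at hle
  have hadj : X.dist (p.getVert i) (p.getVert (i + 1)) ≤ 1 :=
    (dist_eq_one_iff_adj.mpr (p.adj_getVert_succ hi)).le
  have h₁ := hfar _ (p.getVert_mem_support i)
  have h₂ := hfar _ (p.getVert_mem_support (i + 1))
  simp only [gromovProd, dist_comm (v := w)] at hle ⊢
  omega

lemma exists_mem_support_dist_eq_half (hc : X.Connected) {x y : V} {p : X.Walk x y}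
    (hp : p.length = X.dist x y) (w : V) :
    ∃ m ∈ p.support, X.dist x m + X.dist m y = X.dist x y ∧
      X.dist x m = (X.dist x w + X.dist x y - X.dist y w) / 2 := by
  have : X.dist x w ≤ X.dist x y + X.dist y w := hc.dist_triangle
  set i := (X.dist x w + X.dist x y - X.dist y w) / 2
  have hi : i ≤ p.length := by omega
  refine ⟨p.getVert i, p.getVert_mem_support i, dist_add_dist_of_mem_support hp
    (p.getVert_mem_support i), ?_⟩
  simpa using dist_getVert_of_length_eq_dist hp (Nat.zero_le i) hi

lemma FourPoint.exists_mem_support_two_mul_dist_le (h : X.FourPoint δ) (hc : X.Connected)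
    {x y : V} {p : X.Walk x y} (hp : p.length = X.dist x y) (w : V) :
    ∃ m ∈ p.support, 2 * X.dist w m ≤ X.gromovProd w x y + 2 * δ + 1 := by
  obtain ⟨m, hm, hmid, hxm⟩ := exists_mem_support_dist_eq_half hc hp w
  refine ⟨m, hm, ?_⟩
  have h₄ := h w m x y
  have t : X.dist y w ≤ X.dist y x + X.dist x w := hc.dist_triangle
  have e₁ : X.dist w x = X.dist x w := dist_comm
  have e₂ : X.dist w y = X.dist y w := dist_comm
  have e₃ : X.dist m x = X.dist x m := dist_comm
  have e₄ : X.dist y x = X.dist x y := dist_comm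
  simp only [gromovProd]
  omega

lemma FourPoint.slimTriangles (h : X.FourPoint δ) (hc : X.Connected) :
    X.SlimTriangles (2 * δ + 1) := by
  intro x y z pxy pyz pxz hxy hyz hxz m hm
  have hmid := dist_add_dist_of_mem_support hxz hm
  have hgp := h.min_gromovProd_le m x y z
  have hzm : X.dist z m = X.dist m z := dist_comm
  rcases le_total (X.gromovProd m x y) (X.gromovProd m y z) with hle | hle
  · obtain ⟨m', hm', hd⟩ := h.exists_mem_support_two_mul_dist_le hc hxy m
    refine ⟨m', Or.inl hm', ?_⟩
    simp only [gromovProd] at hle hd hgp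
    omega
  · obtain ⟨m', hm', hd⟩ := h.exists_mem_support_two_mul_dist_le hc hyz m
    refine ⟨m', Or.inr hm', ?_⟩
    simp only [gromovProd] at hle hd hgp
    omega

lemma SlimTriangles.exists_mem_support_two_mul_dist_le (h : X.SlimTriangles Δ)
    (hc : X.Connected) {x y : V} {p : X.Walk x y} (hp : p.length = X.dist x y) (w : V) :
    ∃ m ∈ p.support, 2 * X.dist w m ≤ X.gromovProd w x y + 4 * Δ + 1 := by
  obtain ⟨m, hm, hmid, hxm⟩ := exists_mem_support_dist_eq_half hc hp w
  refine ⟨m, hm, ?_⟩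
  obtain ⟨pxw, hxw⟩ := hc.exists_walk_length_eq_dist x w
  obtain ⟨pwy, hwy⟩ := hc.exists_walk_length_eq_dist w y
  obtain ⟨m', hm', hd⟩ := h pxw pwy p hxw hwy hp m hm
  have c₁ : X.dist w m ≤ X.dist w m' + X.dist m' m := hc.dist_triangle
  have c₂ : X.dist m' m = X.dist m m' := dist_comm
  have c₃ : X.dist y w = X.dist w y := dist_comm
  have c₄ : X.dist y w ≤ X.dist y x + X.dist x w := hc.dist_triangle
  have c₅ : X.dist y x = X.dist x y := dist_comm
  simp only [gromovProd]
  rcases hm' with hm' | hm'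
  · have hmid' := dist_add_dist_of_mem_support hxw hm'
    have c₆ : X.dist x m ≤ X.dist x m' + X.dist m' m := hc.dist_triangle
    have c₇ : X.dist w m' = X.dist m' w := dist_comm
    omega
  · have hmid' := dist_add_dist_of_mem_support hwy hm'
    have c₆ : X.dist m y ≤ X.dist m m' + X.dist m' y := hc.dist_triangle
    omega

lemma SlimTriangles.fourPoint (h : X.SlimTriangles Δ) (hc : X.Connected) :
    X.FourPoint (6 * Δ + 1) := by
  refine fourPoint_of_min_gromovProd_le fun w x y z => ?_
  obtain ⟨pxz, hxz⟩ := hc.exists_walk_length_eq_dist x z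
  obtain ⟨pxy, hxy⟩ := hc.exists_walk_length_eq_dist x y
  obtain ⟨pyz, hyz⟩ := hc.exists_walk_length_eq_dist y z
  obtain ⟨m, hm, hdm⟩ := h.exists_mem_support_two_mul_dist_le hc hxz w
  obtain ⟨m', hm', hd⟩ := h pxy pyz pxz hxy hyz hxz m hm
  have c₁ : X.dist m' w ≤ X.dist m' m + X.dist m w := hc.dist_triangle
  have c₂ : X.dist m' m = X.dist m m' := dist_comm
  have c₃ : X.dist m w = X.dist w m := dist_comm
  simp only [gromovProd] at hdm ⊢
  rcases hm' with hm' | hm'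
  · have hmid := dist_add_dist_of_mem_support hxy hm'
    have c₄ : X.dist x w ≤ X.dist x m' + X.dist m' w := hc.dist_triangle
    have c₅ : X.dist y w ≤ X.dist y m' + X.dist m' w := hc.dist_triangle
    have c₆ : X.dist y m' = X.dist m' y := dist_comm
    omega
  · have hmid := dist_add_dist_of_mem_support hyz hm'
    have c₄ : X.dist y w ≤ X.dist y m' + X.dist m' w := hc.dist_triangle
    have c₅ : X.dist z w ≤ X.dist z m' + X.dist m' w := hc.dist_triangle
    have c₆ : X.dist z m' = X.dist m' z := dist_comm
    omega

/-! ### The Morse lemma and quasi-isometric embeddings -/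

/-- Every walk is `1`-Lipschitz, so this lower bound makes `p` a `(C, 0)`-quasi-geodesic. -/
def Walk.IsQuasiGeodesic (C : ℕ) (p : X.Walk a b) : Prop :=
  ∀ ⦃i j⦄, i ≤ j → j ≤ p.length → j - i ≤ C * X.dist (p.getVert i) (p.getVert j)

lemma Walk.IsQuasiGeodesic.exists_walk {p : X.Walk a b} (hp : p.IsQuasiGeodesic C) {u v : V}
    (hu : u ∈ p.support) (hv : v ∈ p.support) :
    ∃ q : X.Walk u v, (∀ x ∈ q.support, x ∈ p.support) ∧ q.length ≤ C * X.dist u v := by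
  obtain ⟨i, rfl, hi⟩ := mem_support_iff_exists_getVert.mp hu
  obtain ⟨j, rfl, hj⟩ := mem_support_iff_exists_getVert.mp hv
  rcases le_total i j with hij | hji
  · obtain ⟨q, hqp, hq⟩ := p.exists_isSubwalk_getVert hij hj
    exact ⟨q, fun x hx => hqp.support_subset hx, hq ▸ hp hij hj⟩
  · obtain ⟨q, hqp, hq⟩ := p.exists_isSubwalk_getVert hji hi
    refine ⟨q.reverse, fun x hx => hqp.support_subset (by simpa using hx), ?_⟩
    rw [length_reverse, hq, dist_comm]
    exact hp hji hi

lemma Walk.isQuasiGeodesic_map_of_length_eq_dist (f : Y →g X)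
    (hf : ∀ u v, Y.dist u v ≤ C * X.dist (f u) (f v)) {u v : W} {q : Y.Walk u v}
    (hq : q.length = Y.dist u v) : (q.map f).IsQuasiGeodesic C := by
  intro i j hij hj
  rw [length_map] at hj
  rw [getVert_map, getVert_map, ← dist_getVert_of_length_eq_dist hq hij hj]
  exact hf _ _

lemma exists_covering_radius {α β : Type*} (d : α → β → ℕ) {A : Set α} (hA : A.Finite)
    (hA' : A.Nonempty) {B : Set β} (hB : B.Nonempty) :
    ∃ D, (∀ a ∈ A, ∃ b ∈ B, d a b ≤ D) ∧ ∃ a ∈ A, ∀ b ∈ B, D ≤ d a b := by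
  classical
  obtain ⟨b₀, hb₀⟩ := hB
  have hex : ∃ D, ∀ a ∈ A, ∃ b ∈ B, d a b ≤ D := by
    obtain ⟨D, hD⟩ := (hA.image (d · b₀)).bddAbove
    exact ⟨D, fun a ha => ⟨b₀, hb₀, hD ⟨a, ha, rfl⟩⟩⟩
  refine ⟨Nat.find hex, Nat.find_spec hex, ?_⟩
  rcases Nat.eq_zero_or_pos (Nat.find hex) with h0 | hpos
  · obtain ⟨a, ha⟩ := hA'
    exact ⟨a, ha, fun b _ => h0 ▸ Nat.zero_le _⟩
  · have := Nat.find_min hex (Nat.sub_one_lt_of_lt hpos)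
    push Not at this
    obtain ⟨a, ha, hfar⟩ := this
    exact ⟨a, ha, fun b hb => by have := hfar b hb; omega⟩

lemma sq_le_two_pow_succ (n : ℕ) : n ^ 2 ≤ 2 ^ (n + 1) := by
  induction n with
  | zero => norm_num
  | succ n ih =>
    rcases lt_or_ge n 3 with hn | hn
    · interval_cases n <;> norm_num
    · rw [pow_succ 2 (n + 1)]
      nlinarith

lemma exists_bound_of_two_mul_le_log (A δ : ℕ) :
    ∃ R, ∀ D, 2 * D ≤ δ * (Nat.log 2 (A * D) + 1) + 1 → D ≤ R := by
  refine ⟨δ * (2 * A * δ + 2 * A + 1) + 1, fun D hD => ?_⟩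
  set l := Nat.log 2 (A * D)
  suffices hl : l ≤ 2 * A * δ + 2 * A by nlinarith
  rcases Nat.eq_zero_or_pos (A * D) with h0 | hpos
  · simp [l, h0]
  have hpow : 2 ^ l ≤ A * D := Nat.pow_log_le_self 2 hpos.ne'
  have hsq : l ^ 2 ≤ 2 * A * (δ * (l + 1) + 1) := by
    calc l ^ 2 ≤ 2 ^ (l + 1) := sq_le_two_pow_succ l
      _ = 2 * 2 ^ l := by ring
      _ ≤ 2 * (A * D) := by omega
      _ ≤ A * (δ * (l + 1) + 1) := by nlinarith
      _ ≤ 2 * A * (δ * (l + 1) + 1) := by nlinarith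
  nlinarith

/-- Walk back along `γ` from `w` for `2 * D` steps (or stop at `a ∈ S`), then jump to a
`D`-close point of `S`. -/
lemma exists_walk_to_set_outside_ball (hc : X.Connected) {γ : X.Walk a b}
    (hγ : γ.length = X.dist a b) (hw : w ∈ γ.support) {S : Set V} (haS : a ∈ S)
    (hnear : ∀ m ∈ γ.support, ∃ u ∈ S, X.dist m u ≤ D) (hfar : ∀ u ∈ S, D ≤ X.dist w u) :
    ∃ c c', ∃ _ : c' ∈ S, ∃ g : X.Walk c c', X.dist a c + X.dist c w = X.dist a w ∧
      X.dist c w ≤ 2 * D ∧ g.length ≤ D ∧ ∀ u ∈ g.support, D ≤ X.dist w u := by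
  obtain ⟨i, rfl, hi⟩ := mem_support_iff_exists_getVert.mp hw
  have hai := dist_getVert_of_length_eq_dist hγ (Nat.zero_le i) hi
  rw [getVert_zero] at hai
  rcases le_or_gt i (2 * D) with hiD | hiD
  · refine ⟨a, a, haS, nil, by simp, by omega, by simp, ?_⟩
    simpa using hfar a haS
  obtain ⟨c', hc'S, hcc'⟩ := hnear _ (γ.getVert_mem_support (i - 2 * D))
  obtain ⟨g, hg⟩ := hc.exists_walk_length_eq_dist (γ.getVert (i - 2 * D)) c'
  have hac := dist_getVert_of_length_eq_dist hγ (Nat.zero_le (i - 2 * D)) (by omega)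
  have hcw := dist_getVert_of_length_eq_dist hγ (Nat.sub_le i (2 * D)) hi
  rw [getVert_zero] at hac
  refine ⟨_, c', hc'S, g, by omega, by omega, by omega, fun u hu => ?_⟩
  have hmid := dist_add_dist_of_mem_support hg hu
  have : X.dist (γ.getVert (i - 2 * D)) (γ.getVert i) ≤
      X.dist (γ.getVert (i - 2 * D)) u + X.dist u (γ.getVert i) := hc.dist_triangle
  rw [dist_comm (u := u)] at this
  omega

lemma exists_detour_outside_ball (hc : X.Connected) {p γ : X.Walk a b} (hp : p.IsQuasiGeodesic C)
    (hγ : γ.length = X.dist a b) (hnear : ∀ m ∈ γ.support, ∃ u ∈ p.support, X.dist m u ≤ D)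
    (hw : w ∈ γ.support) (hfar : ∀ u ∈ p.support, D ≤ X.dist w u) :
    ∃ c c' : V, ∃ Q : X.Walk c c', X.gromovProd w c c' = 0 ∧
      Q.length ≤ (6 * C + 2) * D ∧ ∀ u ∈ Q.support, D ≤ X.dist w u := by
  obtain ⟨c₁, d₁, hd₁, g₁, hac₁, hc₁w, hg₁, hg₁far⟩ :=
    exists_walk_to_set_outside_ball hc hγ hw (S := {u | u ∈ p.support}) p.start_mem_support
      hnear hfar
  obtain ⟨c₂, d₂, hd₂, g₂, hbc₂, hc₂w, hg₂, hg₂far⟩ :=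
    exists_walk_to_set_outside_ball hc (γ := γ.reverse) (by rw [length_reverse, hγ, dist_comm])
      (by simpa using hw) (S := {u | u ∈ p.support}) p.end_mem_support (by simpa using hnear)
      hfar
  obtain ⟨mid, hmid, hmidlen⟩ := hp.exists_walk hd₁ hd₂
  have hab := dist_add_dist_of_mem_support hγ hw
  have t₁ : X.dist a b ≤ X.dist a c₁ + X.dist c₁ b := hc.dist_triangle
  have t₂ : X.dist c₁ b ≤ X.dist c₁ c₂ + X.dist c₂ b := hc.dist_triangle
  have t₃ : X.dist c₁ c₂ ≤ X.dist c₁ w + X.dist w c₂ := hc.dist_triangle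
  have t₄ : X.dist d₁ d₂ ≤ X.dist d₁ c₁ + X.dist c₁ d₂ := hc.dist_triangle
  have t₅ : X.dist c₁ d₂ ≤ X.dist c₁ c₂ + X.dist c₂ d₂ := hc.dist_triangle
  have e₁ : X.dist d₁ c₁ = X.dist c₁ d₁ := dist_comm
  have e₂ : X.dist w c₂ = X.dist c₂ w := dist_comm
  have e₃ : X.dist c₂ b = X.dist b c₂ := dist_comm
  have e₄ : X.dist w b = X.dist b w := dist_comm
  have hd₁d₂ : X.dist d₁ d₂ ≤ 6 * D := by
    have := dist_le g₁
    have := dist_le g₂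
    omega
  refine ⟨c₁, c₂, g₁.append (mid.append g₂.reverse), ?_, ?_, ?_⟩
  · simp only [gromovProd]
    omega
  · have := Nat.mul_le_mul_left C hd₁d₂
    simp only [length_append, length_reverse]
    nlinarith
  · intro u hu
    simp only [mem_support_append_iff, support_reverse, List.mem_reverse] at hu
    rcases hu with hu | hu | hu
    exacts [hg₁far u hu, hfar u (hmid u hu), hg₂far u hu]

/-- At the vertex `w` of `γ` farthest from `p`, at distance `D`, the detour through `p` around
the `D`-ball about `w` has length `O(D)`; in a hyperbolic graph it must be exponential in `D`. -/
lemma FourPoint.exists_forall_mem_support_exists_dist_le (h : X.FourPoint δ) (hc : X.Connected)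
    (C : ℕ) : ∃ R, ∀ ⦃a b : V⦄ (p γ : X.Walk a b), p.IsQuasiGeodesic C →
      γ.length = X.dist a b → ∀ m ∈ γ.support, ∃ u ∈ p.support, X.dist m u ≤ R := by
  obtain ⟨R, hR⟩ := exists_bound_of_two_mul_le_log (6 * C + 2) δ
  refine ⟨R, fun a b p γ hp hγ => ?_⟩
  obtain ⟨D, hnear, w, hw, hfar⟩ := exists_covering_radius X.dist γ.support.finite_toSet
    ⟨a, γ.start_mem_support⟩ (B := {u | u ∈ p.support}) ⟨a, p.start_mem_support⟩
  suffices hD : D ≤ R from fun m hm => (hnear m hm).imp fun u ⟨hu, hd⟩ => ⟨hu, hd.trans hD⟩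
  obtain ⟨c, c', Q, hgp, hQ, hQfar⟩ := exists_detour_outside_ball hc hp hγ hnear hw hfar
  refine hR D ?_
  have := h.two_mul_le_gromovProd_of_walk Q
    (hQ.trans (Nat.lt_pow_succ_log_self one_lt_two _).le) hQfar
  rw [hgp, Nat.succ_eq_add_one] at this
  push_cast at this
  exact_mod_cast (by linarith : (2 * D : ℤ) ≤ δ * (Nat.log 2 ((6 * C + 2) * D) + 1) + 1)

lemma Walk.IsQuasiGeodesic.forall_mem_support_exists_dist_le (hc : X.Connected)
    {p γ : X.Walk a b} (hp : p.IsQuasiGeodesic C) {R : ℕ}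
    (hnear : ∀ m ∈ γ.support, ∃ u ∈ p.support, X.dist m u ≤ R) :
    ∀ u ∈ p.support, ∃ m ∈ γ.support, X.dist u m ≤ R + C * (2 * R + 1) := by
  classical
  intro u hu
  obtain ⟨t, rfl, ht⟩ := mem_support_iff_exists_getVert.mp hu
  -- `i` is the last vertex of `γ` that is `R`-close to `p` before time `t`
  let P i := ∃ j ≤ t, X.dist (γ.getVert i) (p.getVert j) ≤ R
  have hP0 : P 0 := ⟨0, Nat.zero_le t, by simp⟩
  set i := Nat.findGreatest P γ.length
  have hiγ : i ≤ γ.length := Nat.findGreatest_le _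
  have hi_max : i + 1 ≤ γ.length → ¬ P (i + 1) :=
    Nat.findGreatest_is_greatest (Nat.lt_succ_self i)
  obtain ⟨j, hjt, hij⟩ : P i := Nat.findGreatest_spec (Nat.zero_le _) hP0
  clear_value i
  have e : X.dist (p.getVert j) (γ.getVert i) = X.dist (γ.getVert i) (p.getVert j) := dist_comm
  obtain ⟨k, htk, hk, hjk⟩ : ∃ k, t ≤ k ∧ k ≤ p.length ∧
      X.dist (p.getVert j) (p.getVert k) ≤ 2 * R + 1 := by
    rcases hiγ.eq_or_lt with rfl | hi
    · refine ⟨p.length, ht, le_rfl, ?_⟩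
      rw [getVert_length] at e hij ⊢
      omega
    obtain ⟨v, hv, hdv⟩ := hnear _ (γ.getVert_mem_support (i + 1))
    obtain ⟨k, rfl, hk⟩ := mem_support_iff_exists_getVert.mp hv
    have hkt : t < k := by
      by_contra! hkt
      exact hi_max hi ⟨k, hkt, hdv⟩
    have hadj := (dist_eq_one_iff_adj.mpr (γ.adj_getVert_succ hi)).le
    have t₁ : X.dist (p.getVert j) (p.getVert k) ≤
        X.dist (p.getVert j) (γ.getVert i) + X.dist (γ.getVert i) (p.getVert k) :=
      hc.dist_triangle
    have t₂ : X.dist (γ.getVert i) (p.getVert k) ≤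
        X.dist (γ.getVert i) (γ.getVert (i + 1)) + X.dist (γ.getVert (i + 1)) (p.getVert k) :=
      hc.dist_triangle
    exact ⟨k, hkt.le, hk, by omega⟩
  refine ⟨γ.getVert i, γ.getVert_mem_support i, ?_⟩
  have hjk' := (hp (hjt.trans htk) hk).trans (Nat.mul_le_mul_left C hjk)
  have hjt' := p.dist_getVert_le hjt ht
  have t₁ : X.dist (p.getVert t) (γ.getVert i) ≤
      X.dist (p.getVert t) (p.getVert j) + X.dist (p.getVert j) (γ.getVert i) := hc.dist_triangle
  have e' : X.dist (p.getVert t) (p.getVert j) = X.dist (p.getVert j) (p.getVert t) := dist_comm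
  omega

theorem FourPoint.exists_morse_bound (h : X.FourPoint δ) (hc : X.Connected) (C : ℕ) :
    ∃ R, ∀ ⦃a b : V⦄ (p γ : X.Walk a b), p.IsQuasiGeodesic C → γ.length = X.dist a b →
      (∀ m ∈ γ.support, ∃ u ∈ p.support, X.dist m u ≤ R) ∧
        ∀ u ∈ p.support, ∃ m ∈ γ.support, X.dist u m ≤ R := by
  obtain ⟨R, hR⟩ := h.exists_forall_mem_support_exists_dist_le hc C
  refine ⟨R + C * (2 * R + 1), fun a b p γ hp hγ => ⟨fun m hm => ?_,
    hp.forall_mem_support_exists_dist_le hc (hR p γ hp hγ)⟩⟩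
  obtain ⟨u, hu, hd⟩ := hR p γ hp hγ m hm
  exact ⟨u, hu, by omega⟩

/-- Geodesic triangles of `Y` map to quasi-geodesic triangles of `X`, which lie close to
geodesic triangles of `X` by the Morse lemma; these are slim. -/
lemma FourPoint.slimTriangles_of_hom (h : X.FourPoint δ) (hXc : X.Connected)
    (f : Y →g X) (hf : ∀ u v, Y.dist u v ≤ C * X.dist (f u) (f v)) :
    ∃ Δ, Y.SlimTriangles Δ := by
  obtain ⟨R, hR⟩ := h.exists_morse_bound hXc C
  have hside : ∀ ⦃u v : W⦄ (q : Y.Walk u v) (g : X.Walk (f u) (f v)), q.length = Y.dist u v →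
      g.length = X.dist (f u) (f v) → ∀ m ∈ g.support, ∃ w ∈ q.support, X.dist m (f w) ≤ R := by
    intro u v q g hq hg m hm
    obtain ⟨_, hw, hd⟩ := (hR _ g (isQuasiGeodesic_map_of_length_eq_dist f hf hq) hg).1 m hm
    rw [Walk.support_map, List.mem_map] at hw
    obtain ⟨w, hw, rfl⟩ := hw
    exact ⟨w, hw, hd⟩
  refine ⟨C * (R + (2 * δ + 1) + R), fun x y z pxy pyz pxz hxy hyz hxz w hw => ?_⟩
  obtain ⟨gxy, hgxy⟩ := hXc.exists_walk_length_eq_dist (f x) (f y)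
  obtain ⟨gyz, hgyz⟩ := hXc.exists_walk_length_eq_dist (f y) (f z)
  obtain ⟨gxz, hgxz⟩ := hXc.exists_walk_length_eq_dist (f x) (f z)
  obtain ⟨m, hm, hdm⟩ := (hR _ gxz (isQuasiGeodesic_map_of_length_eq_dist f hf hxz) hgxz).2 (f w)
    (by simpa using List.mem_map_of_mem hw)
  obtain ⟨m', hm', hdm'⟩ := h.slimTriangles hXc gxy gyz gxz hgxy hgyz hgxz m hm
  obtain ⟨w', hw', hdw'⟩ : ∃ w', (w' ∈ pxy.support ∨ w' ∈ pyz.support) ∧ X.dist m' (f w') ≤ R := by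
    rcases hm' with hm' | hm'
    · obtain ⟨w', hw', hd⟩ := hside pxy gxy hxy hgxy m' hm'
      exact ⟨w', Or.inl hw', hd⟩
    · obtain ⟨w', hw', hd⟩ := hside pyz gyz hyz hgyz m' hm'
      exact ⟨w', Or.inr hw', hd⟩
  refine ⟨w', hw', (hf w w').trans (Nat.mul_le_mul_left C ?_)⟩
  have t₁ : X.dist (f w) (f w') ≤ X.dist (f w) m + X.dist m (f w') := hXc.dist_triangle
  have t₂ : X.dist m (f w') ≤ X.dist m m' + X.dist m' (f w') := hXc.dist_triangle
  omega

theorem Hyperbolic.of_hom (hX : Hyperbolic X) (hXc : X.Connected)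
    (hYc : Y.Connected) (f : Y →g X) (hf : ∀ u v, Y.dist u v ≤ C * X.dist (f u) (f v)) :
    Hyperbolic Y := by
  obtain ⟨δ, hδ⟩ := hyperbolic_iff_exists_fourPoint.mp hX
  obtain ⟨Δ, hΔ⟩ := hδ.slimTriangles_of_hom hXc f hf
  exact hyperbolic_iff_exists_fourPoint.mpr ⟨_, hΔ.fourPoint hYc⟩

end SimpleGraph

/-! ### Removing an orbit of edges or vertices -/

lemma Fine.coe {K : SimpleGraph V} (hK : Fine K) (J : K.Subgraph) : Fine J.coe := by
  intro n u w hadj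
  have hinj : Function.Injective J.hom := Subgraph.hom_injective
  refine Set.Finite.of_finite_image ((hK n u w (J.adj_sub hadj)).subset ?_)
    (Walk.map_injective_of_injective hinj u u).injOn
  rintro _ ⟨c, ⟨hcyc, hlen, hmem⟩, rfl⟩
  have hmem' : s(u.1, w.1) ∈ (c.map J.hom).edges := by
    rw [Walk.edges_map]
    exact List.mem_map_of_mem (f := Sym2.map J.hom) hmem
  exact ⟨(Walk.isCycle_map_iff_of_injective hinj).mpr hcyc, (Walk.length_map _ _).trans hlen,
    hmem'⟩

lemma qiSubIncl_top {K : SimpleGraph V} {J : K.Subgraph} (hJ : J.coe.Connected) {C : ℕ}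
    (hdist : ∀ u w : J.verts, J.coe.dist u w ≤ C * K.dist u w)
    (hdense : ∀ x, ∃ u ∈ J.verts, K.dist x u ≤ 1) : QISubIncl J ⊤ le_top := by
  refine ⟨C + 1, 1, by simp, zero_le_one, fun u w => ?_, fun x => ?_⟩
  · rw [Subgraph.dist_top_coe]
    have hK : K.dist u w ≤ J.coe.dist u w := J.hom.dist_map_le (hJ.preconnected u w)
    have hJ := hdist u w
    constructor
    · have : (K.dist u w : ℝ) ≤ J.coe.dist u w := by exact_mod_cast hK
      nlinarith [(J.coe.dist u w).cast_nonneg (α := ℝ)]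
    · have : (J.coe.dist u w : ℝ) ≤ C * K.dist u w := by exact_mod_cast hJ
      nlinarith [(K.dist u w).cast_nonneg (α := ℝ)]
  · obtain ⟨u, hu, hxu⟩ := hdense x
    exact ⟨⟨u, hu⟩, by rw [Subgraph.dist_top_coe]; exact_mod_cast hxu⟩

section Removal

variable [Group G] {φ : G →* Equiv.Perm V} {K : SimpleGraph V} {v : V} {S : Set V}

lemma invSubgraph_top (hacts : ActsOn φ K) : InvSubgraph φ (⊤ : K.Subgraph) :=
  fun g => ⟨fun _ _ => trivial, hacts g⟩

lemma InvSubgraph.deleteEdges {J : K.Subgraph} (hJ : InvSubgraph φ J) {E : Set (Sym2 V)}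
    (hE : ∀ (g : G) (e : Sym2 V), e ∈ E → e.map (φ g) ∈ E) :
    InvSubgraph φ (J.deleteEdges E) := by
  refine fun g => ⟨(hJ g).1, fun u w huw => ?_⟩
  rw [Subgraph.deleteEdges_adj] at huw ⊢
  refine ⟨(hJ g).2 u w huw.1, fun hmem => huw.2 ?_⟩
  simpa [Sym2.map_map, Function.comp_def] using hE g⁻¹ _ hmem

lemma InvSubgraph.deleteVerts {J : K.Subgraph} (hJ : InvSubgraph φ J) {S : Set V}
    (hS : ∀ (g : G) (x : V), x ∈ S → φ g x ∈ S) : InvSubgraph φ (J.deleteVerts S) := by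
  have hS' : ∀ (g : G) (x : V), φ g x ∈ S → x ∈ S := fun g x hx => by
    simpa using hS g⁻¹ _ hx
  refine fun g => ⟨fun x hx => ⟨(hJ g).1 x hx.1, fun h => hx.2 (hS' g x h)⟩,
    fun u w huw => ?_⟩
  rw [Subgraph.deleteVerts_adj] at huw ⊢
  obtain ⟨hu, huS, hw, hwS, huw⟩ := huw
  exact ⟨(hJ g).1 u hu, fun h => huS (hS' g u h), (hJ g).1 w hw, fun h => hwS (hS' g w h),
    (hJ g).2 u w huw⟩

def InvSubgraph.hom {J : K.Subgraph} (hJ : InvSubgraph φ J) (g : G) : J.coe →g J.coe where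
  toFun x := ⟨φ g x, (hJ g).1 x x.2⟩
  map_rel' h := (hJ g).2 _ _ h

lemma InvSubgraph.exists_dist_le_of_finite {J : K.Subgraph} (hJ : InvSubgraph φ J)
    (hJc : J.coe.Connected) {F : Set V} (hF : F.Finite) :
    ∃ L, ∀ (g : G) (x y : J.verts), φ g x ∈ F → φ g y ∈ F → J.coe.dist x y ≤ L := by
  have hF' : (Subtype.val ⁻¹' F : Set J.verts).Finite :=
    hF.preimage Subtype.val_injective.injOn
  obtain ⟨L, hL⟩ := ((hF'.prod hF').image fun q => J.coe.dist q.1 q.2).bddAbove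
  refine ⟨L, fun g x y hx hy => ?_⟩
  have hinv : ∀ z : J.verts, hJ.hom g⁻¹ (hJ.hom g z) = z := fun z =>
    Subtype.ext (show φ g⁻¹ (φ g z) = z by simp)
  calc J.coe.dist x y = J.coe.dist (hJ.hom g⁻¹ (hJ.hom g x)) (hJ.hom g⁻¹ (hJ.hom g y)) := by
        rw [hinv, hinv]
    _ ≤ J.coe.dist (hJ.hom g x) (hJ.hom g y) := (hJ.hom g⁻¹).dist_map_le (hJc.preconnected _ _)
    _ ≤ L := hL ⟨(hJ.hom g x, hJ.hom g y), ⟨hx, hy⟩, rfl⟩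

lemma exists_dist_deleteEdges_orbit_le (hK : K.Connected) (hacts : ActsOn φ K) {a b : V}
    {J : K.Subgraph} (hJ : J = (⊤ : K.Subgraph).deleteEdges (⋃ g : G, {s(φ g a, φ g b)}))
    (hJc : J.coe.Connected) :
    ∃ C : ℕ, (∀ u w : J.verts, J.coe.dist u w ≤ C * K.dist u w) ∧
      ∀ x, ∃ u ∈ J.verts, K.dist x u ≤ 1 := by
  set E := ⋃ g : G, {s(φ g a, φ g b)}
  have hverts : ∀ x, x ∈ J.verts := by simp [hJ]
  have hinv : InvSubgraph φ J := hJ ▸ (invSubgraph_top hacts).deleteEdges fun g e he => by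
    simp only [E, Set.mem_iUnion, Set.mem_singleton_iff] at he ⊢
    obtain ⟨g', rfl⟩ := he
    exact ⟨g * g', by simp⟩
  obtain ⟨L, hL⟩ := hinv.exists_dist_le_of_finite hJc (Set.toFinite {a, b})
  refine ⟨L + 1, fun u w => dist_le_mul_dist_of_adj hJc (fun x => ⟨x, hverts x⟩) ?_
    (hK.preconnected u w), fun x => ⟨x, hverts x, by simp⟩⟩
  intro x y hxy
  by_cases hE : s(x, y) ∈ E
  · obtain ⟨g, hg⟩ := Set.mem_iUnion.mp hE
    rw [Set.mem_singleton_iff, Sym2.eq_iff] at hg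
    have := hL g⁻¹ ⟨x, hverts x⟩ ⟨y, hverts y⟩
      (by rcases hg with ⟨rfl, rfl⟩ | ⟨rfl, rfl⟩ <;> simp)
      (by rcases hg with ⟨rfl, rfl⟩ | ⟨rfl, rfl⟩ <;> simp)
    omega
  · have : J.coe.Adj ⟨x, hverts x⟩ ⟨y, hverts y⟩ := by
      show J.Adj x y
      rw [hJ, Subgraph.deleteEdges_adj]
      exact ⟨hxy, hE⟩
    have := dist_eq_one_iff_adj.mpr this
    omega

lemma apply_mem_iff_of_orbit (hS : ∀ x, x ∈ S ↔ ∃ g : G, φ g v = x) (g : G) {x : V} :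
    φ g x ∈ S ↔ x ∈ S := by
  rw [hS, hS]
  constructor
  · rintro ⟨h, hh⟩
    exact ⟨g⁻¹ * h, by simp [hh]⟩
  · rintro ⟨h, rfl⟩
    exact ⟨g * h, by simp⟩

lemma exists_adj_not_mem_of_orbit (hS : ∀ x, x ∈ S ↔ ∃ g : G, φ g v = x) (hK : K.Connected)
    (hacts : ActsOn φ K) {x : V} (hx : x ∉ S) {r : V} (hr : r ∈ S) : ∃ s ∉ S, K.Adj r s := by
  obtain ⟨d, -, hd₁, hd₂⟩ :=
    (hK.preconnected v x).some.exists_boundary_dart _ ((hS v).mpr ⟨1, by simp⟩) hx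
  obtain ⟨g, hg⟩ := (hS _).mp hd₁
  obtain ⟨h, hh⟩ := (hS r).mp hr
  refine ⟨φ (h * g⁻¹) d.snd, (apply_mem_iff_of_orbit hS _).not.mpr hd₂, ?_⟩
  have := hacts (h * g⁻¹) _ _ d.adj
  rwa [← hg, ← Equiv.Perm.mul_apply, ← map_mul, inv_mul_cancel_right, hh] at this

lemma finite_setOf_adj_of_orbit (hS : ∀ x, x ∈ S ↔ ∃ g : G, φ g v = x) (hacts : ActsOn φ K)
    (hv : (K.neighborSet v).Finite) :
    {y | ∃ r ∈ S, K.Adj r y ∧ (r = v ∨ K.Adj v r)}.Finite := by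
  have hR : {r | r ∈ S ∧ (r = v ∨ K.Adj v r)}.Finite := (hv.insert v).subset fun r hr => hr.2
  refine (hR.biUnion fun r hr => ?_).subset
    fun y ⟨r, hr, hry, hvr⟩ => Set.mem_biUnion (t := K.neighborSet) ⟨hr, hvr⟩ hry
  obtain ⟨g, rfl⟩ := (hS r).mp hr.1
  exact (hv.image (φ g)).subset fun y hy => ⟨φ g⁻¹ y, by simpa using hacts g⁻¹ _ _ hy, by simp⟩

lemma exists_dist_retraction_le_of_adj (hS : ∀ x, x ∈ S ↔ ∃ g : G, φ g v = x)
    (hacts : ActsOn φ K) (hv : (K.neighborSet v).Finite)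
    (hJc : ((⊤ : K.Subgraph).deleteVerts S).coe.Connected)
    {π : V → ((⊤ : K.Subgraph).deleteVerts S).verts} (hπ : ∀ x ∉ S, (π x : V) = x)
    (hπS : ∀ x ∈ S, K.Adj x (π x)) :
    ∃ L, ∀ x y, K.Adj x y → ((⊤ : K.Subgraph).deleteVerts S).coe.dist (π x) (π y) ≤ L := by
  have hinv : InvSubgraph φ ((⊤ : K.Subgraph).deleteVerts S) :=
    (invSubgraph_top hacts).deleteVerts fun g _ => (apply_mem_iff_of_orbit hS g).mpr
  -- rerouting a `K`-edge at a removed vertex `φ g v` joins two vertices that `g⁻¹` moves into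
  -- the finite set of `finite_setOf_adj_of_orbit`
  have hπF : ∀ (g : G) (x : V), (x = φ g v ∨ K.Adj (φ g v) x) →
      ∃ r ∈ S, K.Adj r (φ g⁻¹ (π x)) ∧ (r = v ∨ K.Adj v r) := by
    intro g x hx
    by_cases hxS : x ∈ S
    · refine ⟨φ g⁻¹ x, (apply_mem_iff_of_orbit hS _).mpr hxS,
        by simpa using hacts g⁻¹ _ _ (hπS x hxS), ?_⟩
      rcases hx with rfl | hx
      · exact Or.inl (by simp)
      · exact Or.inr (by simpa using hacts g⁻¹ _ _ hx)
    · have hx' : K.Adj (φ g v) x :=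
        hx.resolve_left fun h => hxS (h ▸ (hS _).mpr ⟨g, rfl⟩)
      refine ⟨v, (hS v).mpr ⟨1, by simp⟩, ?_, Or.inl rfl⟩
      rw [hπ x hxS]
      simpa using hacts g⁻¹ _ _ hx'
  obtain ⟨L, hL⟩ := hinv.exists_dist_le_of_finite hJc (finite_setOf_adj_of_orbit hS hacts hv)
  refine ⟨L + 1, fun x y hxy => ?_⟩
  by_cases hxS : x ∈ S
  · obtain ⟨g, hg⟩ := (hS x).mp hxS
    have := hL g⁻¹ (π x) (π y) (hπF g x (Or.inl hg.symm)) (hπF g y (Or.inr (hg ▸ hxy)))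
    omega
  by_cases hyS : y ∈ S
  · obtain ⟨g, hg⟩ := (hS y).mp hyS
    have := hL g⁻¹ (π x) (π y) (hπF g x (Or.inr (hg ▸ hxy.symm))) (hπF g y (Or.inl hg.symm))
    omega
  have hJxy : ((⊤ : K.Subgraph).deleteVerts S).coe.Adj (π x) (π y) := by
    show ((⊤ : K.Subgraph).deleteVerts S).Adj (π x) (π y)
    rw [hπ x hxS, hπ y hyS, Subgraph.deleteVerts_adj]
    exact ⟨trivial, hxS, trivial, hyS, hxy⟩
  exact (dist_eq_one_iff_adj.mpr hJxy).trans_le (by omega)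

lemma exists_retraction_deleteVerts (hnbr : ∀ r ∈ S, ∃ s ∉ S, K.Adj r s) :
    ∃ π : V → ((⊤ : K.Subgraph).deleteVerts S).verts,
      (∀ x ∉ S, (π x : V) = x) ∧ ∀ x ∈ S, K.Adj x (π x) := by
  have : ∀ x, ∃ y : ((⊤ : K.Subgraph).deleteVerts S).verts, (x ∉ S → (y : V) = x) ∧
      (x ∈ S → K.Adj x y) := by
    intro x
    by_cases hx : x ∈ S
    · obtain ⟨s, hs, hxs⟩ := hnbr x hx
      exact ⟨⟨s, trivial, hs⟩, fun h => absurd hx h, fun _ => hxs⟩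
    · exact ⟨⟨x, trivial, hx⟩, fun _ => rfl, fun h => absurd h hx⟩
  choose π hπ using this
  exact ⟨π, fun x hx => (hπ x).1 hx, fun x hx => (hπ x).2 hx⟩

lemma exists_dist_deleteVerts_orbit_le (hK : K.Connected) (hacts : ActsOn φ K)
    (hv : (K.neighborSet v).Finite) {J : K.Subgraph}
    (hJ : J = (⊤ : K.Subgraph).deleteVerts (⋃ g : G, {φ g v})) (hJc : J.coe.Connected) :
    ∃ C : ℕ, (∀ u w : J.verts, J.coe.dist u w ≤ C * K.dist u w) ∧
      ∀ x, ∃ u ∈ J.verts, K.dist x u ≤ 1 := by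
  subst hJ
  have hS : ∀ x, x ∈ ⋃ g : G, ({φ g v} : Set V) ↔ ∃ g : G, φ g v = x := by simp [eq_comm]
  obtain ⟨π, hπ, hπS⟩ := exists_retraction_deleteVerts fun r hr =>
    exists_adj_not_mem_of_orbit hS hK hacts hJc.nonempty.some.2.2 hr
  obtain ⟨L, hL⟩ := exists_dist_retraction_le_of_adj hS hacts hv hJc hπ hπS
  have hπJ : ∀ u : ((⊤ : K.Subgraph).deleteVerts (⋃ g : G, {φ g v})).verts, π u = u :=
    fun u => Subtype.ext (hπ u u.2.2)
  refine ⟨L, fun u w => ?_, fun x => ⟨π x, (π x).2, ?_⟩⟩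
  · simpa only [hπJ] using dist_le_mul_dist_of_adj hJc π hL (hK.preconnected u w)
  · by_cases hxS : x ∈ ⋃ g : G, ({φ g v} : Set V)
    · exact (dist_eq_one_iff_adj.mpr (hπS x hxS)).le
    · simp [hπ x hxS]

end Removal

theorem removals_preserve_fine_and_coarse_geometry_general [Group G]
    (φ : G →* Equiv.Perm V) (K : SimpleGraph V) (hconn : K.Connected)
    (hacts : ActsOn φ K)
    (K' : K.Subgraph)
    (hK' : (∃ a b : V, ∃ _ : K.Adj a b,
              K' = (⊤ : K.Subgraph).deleteEdges (⋃ g : G, {s(φ g a, φ g b)}))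
         ∨ (∃ v : V, (K.neighborSet v).Finite ∧
              K' = (⊤ : K.Subgraph).deleteVerts (⋃ g : G, {φ g v}))) :
    (K'.coe.Connected →
      QISubIncl K' ⊤ le_top ∧ (Hyperbolic K → Hyperbolic K'.coe)) ∧
    (Fine K → Fine K'.coe) := by
  refine ⟨fun hK'c => ?_, fun hK => hK.coe K'⟩
  obtain ⟨C, hdist, hdense⟩ : ∃ C : ℕ, (∀ u w : K'.verts, K'.coe.dist u w ≤ C * K.dist u w) ∧
      ∀ x, ∃ u ∈ K'.verts, K.dist x u ≤ 1 := by
    rcases hK' with ⟨a, b, -, hK'⟩ | ⟨v, hv, hK'⟩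
    · exact exists_dist_deleteEdges_orbit_le hconn hacts hK' hK'c
    · exact exists_dist_deleteVerts_orbit_le hconn hacts hv hK' hK'c
  exact ⟨qiSubIncl_top hK'c hdist hdense, fun hK => hK.of_hom hconn hK'c K'.hom hdist⟩

/-- Removals preserve fineness and coarse geometry: if `G` acts cocompactly on
the connected graph `K` with finite edge stabilizers and `K'` is obtained from
`K` by the `G`-removal of (all translates of) an edge, or of a finite-valence
vertex with its incident edges, then: if `K'` is connected, the inclusion
`K' ⊆ K` is a quasi-isometry (so `K'` is hyperbolic whenever `K` is); and if
`K` is fine then `K'` is fine. -/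
theorem removals_preserve_fine_and_coarse_geometry [Group G]
    (φ : G →* Equiv.Perm V) (K : SimpleGraph V) (hconn : K.Connected)
    (hacts : ActsOn φ K) (hstabs : FiniteEdgeStabs φ K)
    (hedgeorb : FinEdgeOrbits φ K) (hvertorb : FinVertOrbits φ)
    (K' : K.Subgraph)
    (hK' : (∃ a b : V, ∃ _ : K.Adj a b,
              K' = (⊤ : K.Subgraph).deleteEdges (⋃ g : G, {s(φ g a, φ g b)}))
         ∨ (∃ v : V, (K.neighborSet v).Finite ∧
              K' = (⊤ : K.Subgraph).deleteVerts (⋃ g : G, {φ g v}))) :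
    (K'.coe.Connected →
      QISubIncl K' ⊤ le_top ∧ (Hyperbolic K → Hyperbolic K'.coe)) ∧
    (Fine K → Fine K'.coe) :=
  removals_preserve_fine_and_coarse_geometry_general φ K hconn hacts K' hK'
end

section
/- Let a group H act on a connected graph K, and suppose H is generated by a finite set T together with the H-stabilizers of a finite set C of vertices of K. If v is a vertex of K and J is a finite connected subgraph of K containing {v} ∪ Tv ∪ C, then the subgraph L = ⋃_{h ∈ H} hJ is connected, and H acts cocompactly on L. -/
open SimpleGraph

universe u v

variable {V : Type u} {G : Type v}

/-- If `H` acts on a connected graph `K` and `H` is generated by a finite set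
`T` together with the stabilizers of a finite set `C` of vertices, then for any
vertex `v` and any finite connected subgraph `J` containing `{v} ∪ Tv ∪ C`, the
subgraph `L = ⋃_{h ∈ H} hJ` is connected and `H` acts cocompactly on `L`. -/
theorem relative_generation_gives_cocompact_connected_subgraph
    {H : Type v} [Group H] (ψ : H →* Equiv.Perm V) (K : SimpleGraph V)
    (hacts : ActsOn ψ K) (hconn : K.Connected)
    (T : Set H) (hT : T.Finite) (C : Set V) (hC : C.Finite)
    (hgen : Subgroup.closure (T ∪ ⋃ c ∈ C, ((stab ψ c : Subgroup H) : Set H)) = ⊤)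
    (v : V) (Jsub : K.Subgraph) (hJfin : Jsub.verts.Finite)
    (hJconn : Jsub.coe.Connected)
    (hJv : v ∈ Jsub.verts) (hJT : ∀ t ∈ T, ψ t v ∈ Jsub.verts)
    (hJC : C ⊆ Jsub.verts)
    (L : K.Subgraph)
    (hL : L = ⨆ h : H, SimpleGraph.Subgraph.map (actHom hacts h) Jsub) :
    L.coe.Connected ∧
    (∃ F : Set V, F.Finite ∧ ∀ x ∈ L.verts, ∃ h : H, ∃ y ∈ F, ψ h y = x) ∧
    (∃ F : Set (V × V), F.Finite ∧
      ∀ u w : V, L.Adj u w → ∃ h : H, ∃ p ∈ F, ψ h p.1 = u ∧ ψ h p.2 = w) := by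
  subst hL
  set L := ⨆ h : H, SimpleGraph.Subgraph.map (actHom hacts h) Jsub with hLdef
  have hvertsL : ∀ x : V, x ∈ L.verts ↔ ∃ h : H, ∃ a ∈ Jsub.verts, ψ h a = x := by
    intro x
    simp only [hLdef, Subgraph.verts_iSup, Subgraph.map_verts, Set.mem_iUnion,
      Set.mem_image, actHom]
    rfl
  have hadjL : ∀ x y : V,
      L.Adj x y ↔ ∃ h : H, ∃ a b, Jsub.Adj a b ∧ ψ h a = x ∧ ψ h b = y := by
    intro x y
    simp only [hLdef, Subgraph.iSup_adj, Subgraph.map_adj, Relation.Map, actHom]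
    rfl
  have hLmem : ∀ (h : H) {x : V}, x ∈ L.verts → ψ h x ∈ L.verts := by
    intro h x hx
    obtain ⟨h', a, ha, rfl⟩ := (hvertsL x).1 hx
    exact (hvertsL _).2 ⟨h * h', a, ha, by rw [map_mul, Equiv.Perm.mul_apply]⟩
  have hmemJ : ∀ (h : H) {a : V}, a ∈ Jsub.verts → ψ h a ∈ L.verts := by
    intro h a ha
    exact (hvertsL _).2 ⟨h, a, ha, rfl⟩
  have hJle : Jsub ≤ L := by
    refine le_trans ?_ (le_iSup (fun h : H => SimpleGraph.Subgraph.map (actHom hacts h) Jsub) 1)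
    constructor
    · intro x hx
      rw [Subgraph.map_verts]
      exact ⟨x, hx, by show ψ (1 : H) x = x; simp⟩
    · intro a b hab
      exact ⟨a, b, hab, by show ψ (1 : H) a = a; simp, by show ψ (1 : H) b = b; simp⟩
  have hvL : v ∈ L.verts := hJle.1 hJv
  -- reachability inside a translate of J
  have reachJ : ∀ (h : H) {a b : V} (ha : a ∈ Jsub.verts) (hb : b ∈ Jsub.verts),
      L.coe.Reachable ⟨ψ h a, hmemJ h ha⟩ ⟨ψ h b, hmemJ h hb⟩ := by
    intro h a b ha hb
    have hr := hJconn.preconnected ⟨a, ha⟩ ⟨b, hb⟩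
    exact Reachable.map
      (⟨fun x => ⟨ψ h x.1, hmemJ h x.2⟩,
        fun {x y} hxy => (hadjL _ _).2 ⟨h, x.1, y.1, hxy, rfl, rfl⟩⟩ : Jsub.coe →g L.coe) hr
  -- translation of reachability in L
  have reachMul : ∀ (h : H) {a b : V} (ha : a ∈ L.verts) (hb : b ∈ L.verts),
      L.coe.Reachable ⟨a, ha⟩ ⟨b, hb⟩ →
      L.coe.Reachable ⟨ψ h a, hLmem h ha⟩ ⟨ψ h b, hLmem h hb⟩ := by
    intro h a b ha hb hr
    refine Reachable.map
      (⟨fun x => ⟨ψ h x.1, hLmem h x.2⟩, fun {x y} hxy => ?_⟩ : L.coe →g L.coe) hr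
    obtain ⟨h', p, q, hpq, hp, hq⟩ := (hadjL _ _).1 hxy
    refine (hadjL _ _).2 ⟨h * h', p, q, hpq, ?_, ?_⟩ <;>
      rw [map_mul, Equiv.Perm.mul_apply] <;> [rw [hp]; rw [hq]]
  have reachEq : ∀ {a b : V} (_ : a = b) (ha : a ∈ L.verts) (hb : b ∈ L.verts),
      L.coe.Reachable ⟨a, ha⟩ ⟨b, hb⟩ := by
    rintro a b rfl ha hb
    exact Reachable.refl _
  -- key: every translate of v is reachable from v
  have key : ∀ h : H, L.coe.Reachable ⟨v, hvL⟩ ⟨ψ h v, hLmem h hvL⟩ := by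
    intro h
    have hmem : h ∈ Subgroup.closure (T ∪ ⋃ c ∈ C, ((stab ψ c : Subgroup H) : Set H)) := by
      rw [hgen]; trivial
    induction hmem using Subgroup.closure_induction with
    | mem x hx =>
      rcases hx with hx | hx
      · -- x ∈ T
        have := hJconn.preconnected ⟨v, hJv⟩ ⟨ψ x v, hJT x hx⟩
        exact Reachable.map (Subgraph.inclusion hJle) this
      · -- x stabilizes some c ∈ C
        simp only [Set.mem_iUnion] at hx
        obtain ⟨c, hcC, hxc⟩ := hx
        have hxc' : ψ x c = c := hxc
        have h1 : L.coe.Reachable ⟨v, hvL⟩ ⟨c, hJle.1 (hJC hcC)⟩ :=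
          Reachable.map (Subgraph.inclusion hJle)
            (hJconn.preconnected ⟨v, hJv⟩ ⟨c, hJC hcC⟩)
        have h2 := reachJ x (hJC hcC) hJv
        have h3 : L.coe.Reachable ⟨c, hJle.1 (hJC hcC)⟩ ⟨ψ x c, hmemJ x (hJC hcC)⟩ :=
          reachEq hxc'.symm _ _
        exact (h1.trans h3).trans h2
    | one => exact reachEq (by simp) _ _
    | mul x y hx hy ihx ihy =>
      have h2 := reachMul x hvL (hLmem y hvL) ihy
      have h3 : L.coe.Reachable ⟨ψ x (ψ y v), hLmem x (hLmem y hvL)⟩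
          ⟨ψ (x * y) v, hLmem (x * y) hvL⟩ :=
        reachEq (by rw [map_mul, Equiv.Perm.mul_apply]) _ _
      exact (ihx.trans h2).trans h3
    | inv x hx ihx =>
      have h2 := reachMul x⁻¹ hvL (hLmem x hvL) ihx
      have h3 : L.coe.Reachable ⟨ψ x⁻¹ (ψ x v), hLmem x⁻¹ (hLmem x hvL)⟩ ⟨v, hvL⟩ :=
        reachEq (by rw [← Equiv.Perm.mul_apply, ← map_mul]; simp) _ _
      exact (h2.trans h3).symm
  refine ⟨?_, ?_, ?_⟩
  · -- connectivity
    have hpre : L.coe.Preconnected := by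
      rintro ⟨x, hx⟩ ⟨y, hy⟩
      obtain ⟨h1, a, ha, rfl⟩ := (hvertsL x).1 hx
      obtain ⟨h2, b, hb, rfl⟩ := (hvertsL y).1 hy
      have r1 : L.coe.Reachable ⟨ψ h1 a, hx⟩ ⟨ψ h1 v, hmemJ h1 hJv⟩ := reachJ h1 ha hJv
      have r2 : L.coe.Reachable ⟨ψ h2 b, hy⟩ ⟨ψ h2 v, hmemJ h2 hJv⟩ := reachJ h2 hb hJv
      have k1 : L.coe.Reachable ⟨v, hvL⟩ ⟨ψ h1 v, hmemJ h1 hJv⟩ :=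
        (key h1).trans (reachEq rfl _ _)
      have k2 : L.coe.Reachable ⟨v, hvL⟩ ⟨ψ h2 v, hmemJ h2 hJv⟩ :=
        (key h2).trans (reachEq rfl _ _)
      exact ((r1.trans k1.symm).trans k2).trans r2.symm
    exact (SimpleGraph.connected_iff _).mpr ⟨hpre, ⟨⟨v, hvL⟩⟩⟩
  · -- finitely many vertex orbits
    refine ⟨Jsub.verts, hJfin, fun x hx => ?_⟩
    obtain ⟨h, a, ha, rfl⟩ := (hvertsL x).1 hx
    exact ⟨h, a, ha, rfl⟩
  · -- finitely many edge orbits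
    refine ⟨{p : V × V | Jsub.Adj p.1 p.2}, ?_, fun u w huw => ?_⟩
    · refine (hJfin.prod hJfin).subset ?_
      rintro ⟨a, b⟩ hab
      exact ⟨hab.fst_mem, hab.snd_mem⟩
    · obtain ⟨h, a, b, hab, ha, hb⟩ := (hadjL u w).1 huw
      exact ⟨h, (a, b), hab, ha, hb⟩
end

section
/- Let K be a δ-hyperbolic graph, P an embedded λ-quasigeodesic, and G a geodesic with the same endpoints as P, written as a concatenation G = G₁⋯G_ℓ with 10ε ≤ |G_i| ≤ 20ε, where ε = ε(δ,λ) is the slim-rectangle constant. For each i let S_i be a geodesic from the startpoint of G_i to P (so |S_i| ≤ ε), and define subpaths P_i of P from the endpoint of S_i to the endpoint of S_{i+1} (and P_ℓ to the endpoint of P). Then P_i and P_j share at most one point when i ≠ j, and consequently P = P₁P₂⋯P_ℓ. -/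
/-!
The subdivision points of the geodesic are at least `10ε` apart, and each lies within `ε` of its
closest point on `P`, by slimness of the bigon formed by the geodesic and `P`. Suppose the closest
points `t, t'` of two consecutive subdivision points `g, g'` occurred in the wrong order along `P`.
Slimness of the triangle formed by the geodesic from the start to `g'`, the segment from `g'` to
`t'` and `P` up to `t'` puts `g` within `ε` of a point `y` of `P` before `t'`; slimness of the
triangle formed by `P` from `y` to `t`, the segment from `t` to `g` and a geodesic from `g` to `y`
then puts `t'` within `ε` of a point at distance at most `ε` from `g`. So `d(g, g') ≤ 3ε`, which is
absurd. Hence the closest points appear in order along `P`, and cutting the embedded path `P` at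
them yields pieces that meet only at shared endpoints.
-/

open SimpleGraph

universe u v

variable {V : Type u} {G : Type v}

/-- `δ`-hyperbolicity of the path metric (four point condition with constant `δ`). -/
def HyperbolicWith (δ : ℝ) (K : SimpleGraph V) : Prop :=
  ∀ x y z t : V,
    (K.dist x y : ℝ) + (K.dist z t : ℝ) ≤
      max ((K.dist x z : ℝ) + (K.dist y t : ℝ)) ((K.dist x t : ℝ) + (K.dist y z : ℝ)) + δ

/-- A walk is a `l`-quasigeodesic if each of its subwalks between vertices `u,v`
has length at most `l · d(u,v)`. -/
def IsQG (K : SimpleGraph V) (l : ℝ) {a b : V} (P : K.Walk a b) : Prop :=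
  ∀ (u w : V) (P₁ : K.Walk a u) (P₂ : K.Walk u w) (P₃ : K.Walk w b),
    P = P₁.append (P₂.append P₃) → (P₂.length : ℝ) ≤ l * (K.dist u w : ℝ)

/-- The concatenation of a chain of consecutive walks. -/
def chain {K : SimpleGraph V} : ∀ {n : ℕ} (x : Fin (n + 1) → V)
    (_ : ∀ i : Fin n, K.Walk (x i.castSucc) (x i.succ)),
    K.Walk (x 0) (x (Fin.last n))
  | 0, _, _ => SimpleGraph.Walk.nil
  | n + 1, x, seg =>
    ((seg 0).copy (congrArg x (by simp)) rfl).append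
      ((chain (fun i : Fin (n + 1) => x i.succ)
          (fun i => (seg i.succ).copy (congrArg x (Fin.succ_castSucc i).symm) rfl)).copy
        rfl (congrArg x (Fin.succ_last n)))

/-- The slim rectangle property with constant `e` for `l`-quasigeodesics. -/
def SlimRect (K : SimpleGraph V) (l e : ℝ) : Prop :=
  ∀ (a b c d : V) (Q₁ : K.Walk a b) (Q₂ : K.Walk b c) (Q₃ : K.Walk c d)
    (Q₄ : K.Walk d a), IsQG K l Q₁ → IsQG K l Q₂ → IsQG K l Q₃ → IsQG K l Q₄ →
    ∀ x ∈ Q₁.support, ∃ y : V,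
      (y ∈ Q₂.support ∨ y ∈ Q₃.support ∨ y ∈ Q₄.support) ∧ (K.dist x y : ℝ) ≤ e

namespace SimpleGraph.Walk

variable {K : SimpleGraph V} {u v w x y : V}

def IsGeodesic (p : K.Walk u v) : Prop :=
  p.length = K.dist u v

theorem reachable_of_mem_support {p : K.Walk u v} (h : w ∈ p.support) : K.Reachable u w := by
  obtain ⟨n, rfl, -⟩ := mem_support_iff_exists_getVert.1 h
  exact (p.take n).reachable

theorem dist_le_length_of_mem_support {p : K.Walk u v} (h : w ∈ p.support) :
    K.dist u w ≤ p.length := by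
  obtain ⟨n, rfl, -⟩ := mem_support_iff_exists_getVert.1 h
  calc K.dist u (p.getVert n) ≤ (p.take n).length := dist_le _
    _ ≤ p.length := by simp

@[simp]
theorem isGeodesic_copy {p : K.Walk u v} (hu : u = x) (hv : v = y) :
    (p.copy hu hv).IsGeodesic ↔ p.IsGeodesic := by
  subst hu hv
  rfl

theorem IsGeodesic.of_isSubwalk {p : K.Walk u v} {q : K.Walk x y} (hp : p.IsGeodesic)
    (h : q.IsSubwalk p) : q.IsGeodesic := by
  obtain ⟨r₁, r₂, rfl⟩ := h
  have h₁ := r₁.reachable.dist_triangle_left v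
  have h₂ := q.reachable.dist_triangle_left v
  have h₃ := r₂.reachable.dist_triangle_left v
  have := dist_le r₁
  have := dist_le q
  have := dist_le r₂
  simp only [IsGeodesic, length_append] at hp ⊢
  omega

theorem IsGeodesic.isQG {p : K.Walk u v} (hp : p.IsGeodesic) {l : ℝ} (hl : 1 ≤ l) :
    IsQG K l p := by
  rintro x y P₁ P₂ P₃ rfl
  have hP₂ : P₂.IsGeodesic := hp.of_isSubwalk ⟨P₁, P₃, by rw [append_assoc]⟩
  rw [hP₂]
  exact le_mul_of_one_le_left (Nat.cast_nonneg _) hl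

end SimpleGraph.Walk

open SimpleGraph.Walk

section Quasigeodesics

variable {K : SimpleGraph V} {l e : ℝ} {a b c u v x y : V}

theorem IsQG.of_isSubwalk {p : K.Walk u v} {q : K.Walk x y} (hp : IsQG K l p)
    (h : q.IsSubwalk p) : IsQG K l q := by
  obtain ⟨r₁, r₂, rfl⟩ := h
  rintro x' y' Q₁ Q₂ Q₃ rfl
  exact hp x' y' (r₁.append Q₁) Q₂ (Q₃.append r₂) (by simp only [append_assoc])

theorem IsQG.reverse {p : K.Walk u v} (hp : IsQG K l p) : IsQG K l p.reverse := by
  intro x y P₁ P₂ P₃ h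
  rw [dist_comm, ← length_reverse]
  refine hp y x P₃.reverse P₂.reverse P₁.reverse ?_
  rw [← reverse_reverse p, h]
  simp only [reverse_append, append_assoc]

@[simp]
theorem isQG_copy {p : K.Walk u v} (hu : u = x) (hv : v = y) :
    IsQG K l (p.copy hu hv) ↔ IsQG K l p := by
  subst hu hv
  rfl

theorem isQG_nil (l : ℝ) (u : V) : IsQG K l (Walk.nil : K.Walk u u) := by
  intro x y P₁ P₂ P₃ h
  have hP₂ : P₂.length = 0 := by
    have := congrArg length h
    simp only [length_nil, length_append] at this
    omega
  obtain rfl := eq_of_length_eq_zero hP₂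
  simp [hP₂]

theorem SlimRect.exists_near_of_triangle (hslim : SlimRect K l e) {Q₁ : K.Walk a b}
    {Q₂ : K.Walk b c} {Q₃ : K.Walk c a} (h₁ : IsQG K l Q₁) (h₂ : IsQG K l Q₂)
    (h₃ : IsQG K l Q₃) (hx : x ∈ Q₁.support) :
    ∃ y, (y ∈ Q₂.support ∨ y ∈ Q₃.support) ∧ (K.dist x y : ℝ) ≤ e := by
  obtain ⟨y, hy | hy | hy, hxy⟩ := hslim a b c a Q₁ Q₂ Q₃ .nil h₁ h₂ h₃ (isQG_nil l a) x hx
  · exact ⟨y, .inl hy, hxy⟩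
  · exact ⟨y, .inr hy, hxy⟩
  · rw [support_nil, List.mem_singleton] at hy
    exact ⟨y, .inr (hy ▸ Q₃.end_mem_support), hxy⟩

theorem SlimRect.exists_near_of_bigon (hslim : SlimRect K l e) {Q₁ : K.Walk a b}
    {Q₂ : K.Walk b a} (h₁ : IsQG K l Q₁) (h₂ : IsQG K l Q₂) (hx : x ∈ Q₁.support) :
    ∃ y ∈ Q₂.support, (K.dist x y : ℝ) ≤ e := by
  obtain ⟨y, hy | hy, hxy⟩ := hslim.exists_near_of_triangle h₁ (isQG_nil l b) h₂ hx
  · rw [support_nil, List.mem_singleton] at hy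
    exact ⟨y, hy ▸ Q₂.start_mem_support, hxy⟩
  · exact ⟨y, hy, hxy⟩

theorem SlimRect.dist_le_of_isClosest (hslim : SlimRect K l e) (hl : 1 ≤ l)
    {Γ P : K.Walk a b} (hΓ : Γ.IsGeodesic) (hP : IsQG K l P) {g t : V} (hg : g ∈ Γ.support)
    (hclosest : ∀ w ∈ P.support, K.dist g t ≤ K.dist g w) : (K.dist g t : ℝ) ≤ e := by
  obtain ⟨y, hy, hgy⟩ := hslim.exists_near_of_bigon (hΓ.isQG hl) hP.reverse hg
  rw [support_reverse, List.mem_reverse] at hy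
  exact le_trans (by exact_mod_cast hclosest y hy) hgy

theorem SlimRect.dist_getVert_le_two_mul (hslim : SlimRect K l e) (hl : 1 ≤ l)
    {P : K.Walk a b} (hP : IsQG K l P) {g : V} {s q p : ℕ} (hsq : s ≤ q) (hqp : q ≤ p)
    (hgs : (K.dist g (P.getVert s) : ℝ) ≤ e) {S : K.Walk g (P.getVert p)} (hS : S.IsGeodesic)
    (hSe : (S.length : ℝ) ≤ e) : (K.dist g (P.getVert q) : ℝ) ≤ 2 * e := by
  let R : K.Walk (P.getVert s) (P.getVert p) :=
    ((P.drop s).take (p - s)).copy rfl (by rw [drop_getVert, Nat.add_sub_cancel' (by omega)])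
  have hR : IsQG K l R := by
    simpa [R] using hP.of_isSubwalk (((P.drop s).isSubwalk_take _).trans (P.isSubwalk_drop s))
  have hqR : P.getVert q ∈ R.support := by
    have hget : R.getVert (q - s) = P.getVert q := by
      simp only [R, getVert_copy, take_getVert, drop_getVert]
      rw [min_eq_right (by omega), Nat.add_sub_cancel' hsq]
    exact hget ▸ R.getVert_mem_support _
  obtain ⟨N, hN⟩ :=
    (S.reachable.trans (R.reverse.reachable)).exists_walk_length_eq_dist
  obtain ⟨z, hz, hqz⟩ :=
    hslim.exists_near_of_triangle hR (hS.isQG hl).reverse (IsGeodesic.isQG hN hl) hqR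
  have hgz : K.Reachable g z ∧ (K.dist g z : ℝ) ≤ e := by
    rcases hz with hz | hz
    · rw [support_reverse, List.mem_reverse] at hz
      exact ⟨reachable_of_mem_support hz,
        le_trans (by exact_mod_cast dist_le_length_of_mem_support hz) hSe⟩
    · refine ⟨reachable_of_mem_support hz, le_trans ?_ hgs⟩
      exact_mod_cast hN ▸ dist_le_length_of_mem_support hz
  have : (K.dist g (P.getVert q) : ℝ) ≤ K.dist g z + K.dist z (P.getVert q) := by
    exact_mod_cast hgz.1.dist_triangle_left _
  rw [dist_comm (u := z)] at this
  linarith [hgz.2]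

theorem SlimRect.le_of_three_mul_lt_dist (hslim : SlimRect K l e) (hl : 1 ≤ l)
    {P : K.Walk a b} (hP : IsQG K l P) {g g' : V} {Q : K.Walk a g'} (hQ : Q.IsGeodesic)
    (hg : g ∈ Q.support) (hgg' : 3 * e < K.dist g g') {p p' : ℕ} {t t' : V}
    (ht : P.getVert p = t) (ht' : P.getVert p' = t')
    {S : K.Walk g t} (hS : S.IsGeodesic) (hSe : (S.length : ℝ) ≤ e)
    {S' : K.Walk g' t'} (hS' : S'.IsGeodesic) (hS'e : (S'.length : ℝ) ≤ e) :
    p ≤ p' := by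
  subst ht ht'
  by_contra! hlt
  have ht'g' : (K.dist (P.getVert p') g' : ℝ) ≤ e := by
    rw [dist_comm, hS'.symm]
    exact hS'e
  suffices hgt' : (K.dist g (P.getVert p') : ℝ) ≤ 2 * e by
    have : (K.dist g g' : ℝ) ≤ K.dist g (P.getVert p') + K.dist (P.getVert p') g' := by
      exact_mod_cast S'.reverse.reachable.dist_triangle_right g
    linarith
  obtain ⟨y, hy | hy, hgy⟩ := hslim.exists_near_of_triangle (hQ.isQG hl) (hS'.isQG hl)
    (hP.of_isSubwalk (P.isSubwalk_take p')).reverse hg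
  · have ht'y : (K.dist (P.getVert p') y : ℝ) ≤ e := by
      have hy' : y ∈ S'.reverse.support := by rwa [support_reverse, List.mem_reverse]
      refine le_trans ?_ hS'e
      exact_mod_cast length_reverse S' ▸ dist_le_length_of_mem_support hy'
    have : (K.dist g (P.getVert p') : ℝ) ≤ K.dist g y + K.dist y (P.getVert p') := by
      exact_mod_cast ((reachable_of_mem_support hy).symm.trans S'.reachable).dist_triangle_right g
    rw [dist_comm (u := y)] at this
    linarith
  · rw [support_reverse, List.mem_reverse] at hy
    obtain ⟨s, rfl, hs⟩ := mem_support_iff_exists_getVert.1 hy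
    rw [take_length] at hs
    rw [take_getVert, min_eq_right (by omega)] at hgy
    exact hslim.dist_getVert_le_two_mul hl hP (by omega) hlt.le hgy hS hSe

end Quasigeodesics

section Chains

variable {K : SimpleGraph V} {a b : V}

theorem chain_succ {n : ℕ} (x : Fin (n + 2) → V)
    (seg : ∀ i : Fin (n + 1), K.Walk (x i.castSucc) (x i.succ)) :
    chain x seg = (seg 0).append (chain (fun i => x i.succ) fun i => seg i.succ) :=
  rfl

theorem exists_chain_eq_append {n : ℕ} (x : Fin (n + 1) → V)
    (seg : ∀ i : Fin n, K.Walk (x i.castSucc) (x i.succ)) (i : Fin n) :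
    ∃ (U : K.Walk (x 0) (x i.castSucc)) (W : K.Walk (x i.succ) (x (Fin.last n))),
      chain x seg = U.append ((seg i).append W) := by
  induction n with
  | zero => exact i.elim0
  | succ n ih =>
    rw [chain_succ]
    cases i using Fin.cases with
    | zero => exact ⟨.nil, _, rfl⟩
    | succ j =>
      obtain ⟨U, W, h⟩ := ih (fun i => x i.succ) (fun i => seg i.succ) j
      exact ⟨(seg 0).append U, W, by rw [h, append_assoc]; rfl⟩

theorem mem_support_chain {n : ℕ} (x : Fin (n + 1) → V)
    (seg : ∀ i : Fin n, K.Walk (x i.castSucc) (x i.succ)) (i : Fin (n + 1)) :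
    x i ∈ (chain x seg).support := by
  induction n with
  | zero => exact Fin.fin_one_eq_zero i ▸ (chain x seg).start_mem_support
  | succ n ih =>
    show x i ∈ ((seg 0).append (chain (fun i => x i.succ) fun i => seg i.succ)).support
    rw [mem_support_append_iff]
    cases i using Fin.cases with
    | zero => exact .inl (seg 0).start_mem_support
    | succ j => exact .inr (ih (fun i => x i.succ) (fun i => seg i.succ) j)

theorem exists_chain_eq_of_monotone {n : ℕ} (t : Fin (n + 1) → V)
    (P : K.Walk (t 0) (t (Fin.last n))) {π : Fin (n + 1) → ℕ} (hπ : Monotone π)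
    (hπ0 : π 0 = 0) (hπlast : π (Fin.last n) = P.length) (ht : ∀ i, P.getVert (π i) = t i) :
    ∃ seg : ∀ i : Fin n, K.Walk (t i.castSucc) (t i.succ), chain t seg = P ∧
      ∀ i, ∀ z ∈ (seg i).support, ∃ s, π i.castSucc ≤ s ∧ s ≤ π i.succ ∧ P.getVert s = z := by
  induction n with
  | zero =>
    refine ⟨finZeroElim, ?_, fun i => i.elim0⟩
    exact (length_eq_zero_iff.1 (hπlast.symm.trans hπ0)).eq_nil.symm
  | succ n ih =>
    have hπ1 : ∀ i : Fin (n + 1), π (Fin.succ 0) ≤ π i.succ :=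
      fun i => hπ (Fin.succ_le_succ_iff.2 i.zero_le)
    obtain ⟨σ, hσ, hσwin⟩ := ih (fun i => t i.succ) ((P.drop (π (Fin.succ 0))).copy (ht _) rfl)
      (π := fun i => π i.succ - π (Fin.succ 0))
      (fun i j hij => Nat.sub_le_sub_right (hπ (Fin.succ_le_succ_iff.2 hij)) _)
      (Nat.sub_self _) (by rw [length_copy, drop_length, ← hπlast]; rfl)
      (fun i => by rw [getVert_copy, drop_getVert, Nat.add_sub_cancel' (hπ1 i), ht])
    refine ⟨Fin.cases ((P.take (π (Fin.succ 0))).copy rfl (ht _)) σ, ?_, ?_⟩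
    · rw [chain_succ]
      change ((P.take _).copy rfl (ht _)).append (chain (fun i => t i.succ) σ) = P
      rw [hσ, append_copy_copy, copy_rfl_rfl, append_take_drop_eq]
    · intro i z hz
      cases i using Fin.cases with
      | zero =>
        change z ∈ ((P.take _).copy rfl (ht _)).support at hz
        rw [support_copy] at hz
        obtain ⟨s, rfl, hs⟩ := mem_support_iff_exists_getVert.1 hz
        rw [take_length] at hs
        refine ⟨s, by simp [hπ0], by omega, ?_⟩
        rw [take_getVert, min_eq_right (by omega)]
      | succ j =>
        obtain ⟨s, hs₁, hs₂, rfl⟩ := hσwin j z hz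
        refine ⟨π (Fin.succ 0) + s, ?_, ?_, by rw [getVert_copy, drop_getVert]⟩
        · rw [← Fin.succ_castSucc]
          have := hπ1 j.castSucc
          omega
        · have := hπ1 j.succ
          omega

end Chains

section Splitting

variable {K : SimpleGraph V} {l e : ℝ} {a b : V}

theorem exists_chain_eq_of_isPath {n : ℕ} (t : Fin (n + 1) → V) {P : K.Walk a b}
    (hP : P.IsPath) (ha : t 0 = a) (hb : t (Fin.last n) = b) {π : Fin (n + 1) → ℕ}
    (hπ : Monotone π) (hπ0 : π 0 = 0) (hπlast : π (Fin.last n) = P.length)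
    (ht : ∀ i, P.getVert (π i) = t i) :
    ∃ seg : ∀ i : Fin n, K.Walk (t i.castSucc) (t i.succ),
      (∀ i j : Fin n, i ≠ j → ∀ z w : V, z ∈ (seg i).support → z ∈ (seg j).support →
        w ∈ (seg i).support → w ∈ (seg j).support → z = w) ∧
      (chain t seg).copy ha hb = P := by
  subst ha hb
  obtain ⟨seg, hchain, hwin⟩ := exists_chain_eq_of_monotone t P hπ hπ0 hπlast ht
  have hshared : ∀ i j, i < j → ∀ z ∈ (seg i).support, z ∈ (seg j).support → z = t i.succ := by
    intro i j hij z hzi hzj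
    obtain ⟨s, -, hs, rfl⟩ := hwin i z hzi
    obtain ⟨s', hs', hs'', hss'⟩ := hwin j _ hzj
    have hle : π i.succ ≤ π j.castSucc := hπ (Fin.succ_le_castSucc_iff.2 hij)
    have hlast : π j.succ ≤ P.length := hπlast ▸ hπ (Fin.le_last _)
    have : s' = s := hP.getVert_injOn (show s' ≤ P.length by omega) (show s ≤ P.length by omega) hss'
    rw [show s = π i.succ by omega, ht]
  refine ⟨seg, fun i j hij z w hzi hzj hwi hwj => ?_, by rw [hchain, copy_rfl_rfl]⟩
  rcases hij.lt_or_gt with h | h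
  · rw [hshared i j h z hzi hzj, hshared i j h w hwi hwj]
  · rw [hshared j i h z hzj hzi, hshared j i h w hwj hwi]

theorem SlimRect.monotone_of_closest (hslim : SlimRect K l e) (hl : 1 ≤ l) {n : ℕ}
    {x t : Fin (n + 1) → V} {seg : ∀ i : Fin n, K.Walk (x i.castSucc) (x i.succ)}
    (hΓ : (chain x seg).IsGeodesic) (hseg : ∀ i, 3 * e < (seg i).length)
    {P : K.Walk (x 0) b} (hP : IsQG K l P) {π : Fin (n + 1) → ℕ}
    (hπ : ∀ i, P.getVert (π i) = t i) (hπlast : ∀ i, π i ≤ π (Fin.last n))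
    {S : ∀ i : Fin n, K.Walk (x i.castSucc) (t i.castSucc)} (hS : ∀ i, (S i).IsGeodesic)
    (hSe : ∀ i, ((S i).length : ℝ) ≤ e) : Monotone π := by
  refine Fin.monotone_iff_le_succ.2 fun i => ?_
  obtain ⟨j, hj⟩ | hi := Fin.eq_castSucc_or_eq_last i.succ
  · obtain ⟨U, W, hUW⟩ := exists_chain_eq_append x seg i
    have hsegi : (seg i).IsGeodesic := hΓ.of_isSubwalk ⟨U, W, by rw [hUW, append_assoc]⟩
    have hQ : (U.append (seg i)).IsGeodesic :=
      hΓ.of_isSubwalk ⟨.nil, W, by rw [hUW, nil_append, append_assoc]⟩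
    rw [hj]
    refine hslim.le_of_three_mul_lt_dist hl hP (Q := (U.append (seg i)).copy rfl (by rw [hj]))
      (by simpa using hQ) (by simp) ?_ (hπ _) (hπ _) (hS i) (hSe i) (hS j) (hSe j)
    rw [← hj, ← hsegi]
    exact hseg i
  · rw [hi]
    exact hπlast _

end Splitting

theorem fellow_traveling_path_splitting_general (K : SimpleGraph V) (l e : ℝ) (hl : 1 ≤ l) (he : 0 < e)
    (hslim : SlimRect K l e)
    (a b : V) (P : K.Walk a b) (hPpath : P.IsPath) (hPqg : IsQG K l P)
    (m : ℕ) (gv : Fin (m + 1) → V)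
    (hg0 : gv 0 = a) (hgl : gv (Fin.last m) = b)
    (Gseg : ∀ i : Fin m, K.Walk (gv i.castSucc) (gv i.succ))
    (hgeo : (chain gv Gseg).length = K.dist a b)
    (hlen : ∀ i : Fin m, 10 * e ≤ ((Gseg i).length : ℝ) ∧
      ((Gseg i).length : ℝ) ≤ 20 * e)
    (t : Fin (m + 1) → V) (ht : ∀ i : Fin m, t i.castSucc ∈ P.support)
    (htl : t (Fin.last m) = b)
    (S : ∀ i : Fin m, K.Walk (gv i.castSucc) (t i.castSucc))
    (hSgeo : ∀ i : Fin m, (S i).length = K.dist (gv i.castSucc) (t i.castSucc))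
    (hSmin : ∀ i : Fin m, ∀ w ∈ P.support,
      K.dist (gv i.castSucc) (t i.castSucc) ≤ K.dist (gv i.castSucc) w) :
    ∃ Pseg : ∀ i : Fin m, K.Walk (t i.castSucc) (t i.succ),
      (∀ i j : Fin m, i ≠ j → ∀ z w : V,
        z ∈ (Pseg i).support → z ∈ (Pseg j).support →
        w ∈ (Pseg i).support → w ∈ (Pseg j).support → z = w) ∧
      ∃ h0 : t 0 = a, (chain t Pseg).copy h0 htl = P := by
  subst hg0 hgl
  have hΓ : (chain gv Gseg).IsGeodesic := hgeo
  have hSe : ∀ i, ((S i).length : ℝ) ≤ e := fun i => by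
    rw [hSgeo]
    exact hslim.dist_le_of_isClosest hl hΓ hPqg (mem_support_chain gv Gseg _) (hSmin i)
  have ht0 : t 0 = gv 0 := by
    cases m with
    | zero => exact htl -- `Fin.last 0` is `0`
    | succ m =>
      have := hSmin 0 _ P.start_mem_support
      simp only [Fin.castSucc_zero, dist_self, nonpos_iff_eq_zero] at this
      exact (eq_of_length_eq_zero ((hSgeo 0).trans this)).symm
  have hmem : ∀ i, t i ∈ P.support := Fin.lastCases (by rw [htl]; exact P.end_mem_support) ht
  choose π hπ hπP using fun i => mem_support_iff_exists_getVert.1 (hmem i)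
  have hπ0 : π 0 = 0 :=
    hPpath.getVert_injOn (hπP 0) (Nat.zero_le _) (by rw [hπ, getVert_zero, ht0])
  have hπlast : π (Fin.last m) = P.length :=
    hPpath.getVert_injOn (hπP _) (le_refl P.length) (by rw [hπ, getVert_length, htl])
  have hmono := hslim.monotone_of_closest hl hΓ (fun i => by linarith [(hlen i).1]) hPqg hπ
    (fun i => hπlast ▸ hπP i) hSgeo hSe
  obtain ⟨Pseg, hdisj, hchain⟩ := exists_chain_eq_of_isPath t hPpath ht0 htl hmono hπ0 hπlast hπ
  exact ⟨Pseg, hdisj, ht0, hchain⟩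

/-- Fellow traveling: if `P` is an embedded `λ`-quasigeodesic and `G` is a
geodesic with the same endpoints subdivided into segments `G i` with
`10ε ≤ |G i| ≤ 20ε`, and `S i` is a geodesic from the startpoint of `G i` to
`P` ending at `t i`, then the subpaths `P i` of `P` from the endpoint of `S i`
to the endpoint of `S (i+1)` (and `P m` ending at the endpoint of `P`) pairwise
share at most one point, and consequently `P = P₁ P₂ ⋯ P_m`. -/
theorem fellow_traveling_path_splitting (K : SimpleGraph V) (δ : ℝ)
    (hδ : HyperbolicWith δ K) (l e : ℝ) (hl : 1 ≤ l) (he : 0 < e)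
    (hslim : SlimRect K l e)
    (a b : V) (P : K.Walk a b) (hPpath : P.IsPath) (hPqg : IsQG K l P)
    (m : ℕ) (hm : 0 < m) (gv : Fin (m + 1) → V)
    (hg0 : gv 0 = a) (hgl : gv (Fin.last m) = b)
    (Gseg : ∀ i : Fin m, K.Walk (gv i.castSucc) (gv i.succ))
    (hgeo : (chain gv Gseg).length = K.dist a b)
    (hlen : ∀ i : Fin m, 10 * e ≤ ((Gseg i).length : ℝ) ∧
      ((Gseg i).length : ℝ) ≤ 20 * e)
    (t : Fin (m + 1) → V) (ht : ∀ i : Fin m, t i.castSucc ∈ P.support)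
    (htl : t (Fin.last m) = b)
    (S : ∀ i : Fin m, K.Walk (gv i.castSucc) (t i.castSucc))
    (hSgeo : ∀ i : Fin m, (S i).length = K.dist (gv i.castSucc) (t i.castSucc))
    (hSmin : ∀ i : Fin m, ∀ w ∈ P.support,
      K.dist (gv i.castSucc) (t i.castSucc) ≤ K.dist (gv i.castSucc) w) :
    ∃ Pseg : ∀ i : Fin m, K.Walk (t i.castSucc) (t i.succ),
      (∀ i j : Fin m, i ≠ j → ∀ z w : V,
        z ∈ (Pseg i).support → z ∈ (Pseg j).support →
        w ∈ (Pseg i).support → w ∈ (Pseg j).support → z = w) ∧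
      ∃ h0 : t 0 = a, (chain t Pseg).copy h0 htl = P :=
  fellow_traveling_path_splitting_general K l e hl he hslim a b P hPpath hPqg m gv hg0 hgl Gseg hgeo
    hlen t ht htl S hSgeo hSmin
end

section
/- Let A be a countable group with a proper left-invariant metric d. Then for every g ∈ A, every pair of subgroups B, C ≤ A, and every constant K ≥ 0, there exists M = M(B,C,g,d,K) ≥ 0 such that B ∩ N_K(gC) ⊆ N_M(B ∩ gCg⁻¹), where N_r denotes the closed r-neighborhood in (A,d). -/
open SimpleGraph

universe u v

variable {V : Type u} {G : Type v}

/-- A proper left-invariant metric on the group `G`: a metric (given as a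
distance function) satisfying `d(ab,ac) = d(b,c)` whose closed balls are
finite. -/
structure IsPLIMetric [Group G] (d : G → G → ℝ) : Prop where
  refl : ∀ x : G, d x x = 0
  eq_of_dist_eq_zero : ∀ x y : G, d x y = 0 → x = y
  symm : ∀ x y : G, d x y = d y x
  triangle : ∀ x y z : G, d x z ≤ d x y + d y z
  left_inv : ∀ a x y : G, d (a * x) (a * y) = d x y
  proper : ∀ (x : G) (r : ℝ), {y : G | d x y ≤ r}.Finite

/-- Bounded intersection: for a countable group `A` with a proper left-invariant
metric `d`, for all `g ∈ A`, subgroups `B, C ≤ A` and `K ≥ 0`, there is `M ≥ 0`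
with `B ∩ N_K(gC) ⊆ N_M(B ∩ gCg⁻¹)`. -/
theorem bounded_intersection {A : Type v} [Group A] [Countable A]
    (d : A → A → ℝ) (hd : IsPLIMetric d) (g : A) (B C : Subgroup A)
    (K : ℝ) (hK : 0 ≤ K) :
    ∃ M : ℝ, 0 ≤ M ∧ ∀ x : A, x ∈ B → (∃ c ∈ C, d x (g * c) ≤ K) →
      ∃ y : A, y ∈ B ∧ y ∈ conjSub g C ∧ d x y ≤ M := by
 classical
  have hnn : ∀ x y : A, 0 ≤ d x y := by
    intro x y
    have h1 := hd.triangle x y x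
    rw [hd.refl, hd.symm y x] at h1
    linarith
  set S : Set A := {a | d 1 a ≤ K} with hS
  have hSfin : S.Finite := hd.proper 1 K
  set P : A → Prop := fun s => ∃ x : A, x ∈ B ∧ ∃ c ∈ C, x⁻¹ * (g * c) = s with hP
  set rep : A → A := fun s => if h : P s then h.choose else 1 with hrep
  set f : A → ℝ := fun s => d (rep s) 1 with hf
  refine ⟨∑ s ∈ hSfin.toFinset, f s, Finset.sum_nonneg fun s _ => hnn _ _, ?_⟩
  rintro x hxB ⟨c, hcC, hdxc⟩
  set s : A := x⁻¹ * (g * c) with hs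
  have hsS : s ∈ S := by
    have := hd.left_inv x 1 s
    simp only [mul_one, hs, mul_inv_cancel_left] at this
    simpa [hS, Set.mem_setOf_eq] using this.symm.trans_le hdxc
  have hPs : P s := ⟨x, hxB, c, hcC, rfl⟩
  have hrep_eq : rep s = hPs.choose := by simp [hrep, hPs]
  obtain ⟨hx0B, c0, hc0C, hx0eq⟩ := hPs.choose_spec
  set x0 : A := hPs.choose
  refine ⟨x * x0⁻¹, mul_mem hxB (inv_mem hx0B), ?_, ?_⟩
  · refine ⟨c * c0⁻¹, mul_mem hcC (inv_mem hc0C), ?_⟩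
    have h1 : x = g * c * s⁻¹ := by
      rw [hs]; group
    have h2 : x0 = g * c0 * s⁻¹ := by
      rw [← hx0eq]; group
    simp only [MulEquiv.toMonoidHom_eq_coe, MonoidHom.coe_coe, MulAut.conj_apply]
    rw [h1, h2]; group
  · have h3 : d x (x * x0⁻¹) = d 1 x0⁻¹ := by
      have := hd.left_inv x 1 x0⁻¹
      simpa using this
    have h4 : d 1 x0⁻¹ = d x0 1 := by
      have := hd.left_inv x0 1 x0⁻¹
      simpa using this.symm
    rw [h3, h4]
    have : d x0 1 = f s := by rw [hf]; simp [hrep_eq]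
    rw [this]
    exact Finset.single_le_sum (fun i _ => hnn _ _) (by simpa using hsS)
end

section
/- Let G be a countable group with proper left-invariant metric d, P a finite collection of subgroups, and H ≤ G. For each σ ≥ 0 there exists L = L(H,d,σ,P) > 0 such that: whenever h ∈ H can be written h = g p f with d(1,g) ≤ σ, d(1,f) ≤ σ, and p ∈ P for some P ∈ P, then h = ab with a ∈ H ∩ gPg⁻¹, b ∈ H, and d(1,b) ≤ L. -/
open SimpleGraph

universe u v

variable {V : Type u} {G : Type v}

/-- Parabolic approximation: for a countable group `G` with proper
left-invariant metric `d`, a finite collection `Ps` of subgroups and `H ≤ G`,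
for each `σ ≥ 0` there is `L > 0` such that whenever `h ∈ H` is written
`h = g p f` with `d(1,g) ≤ σ`, `d(1,f) ≤ σ` and `p ∈ P` for some `P ∈ Ps`,
then `h = a b` with `a ∈ H ∩ gPg⁻¹`, `b ∈ H` and `d(1,b) ≤ L`. -/
theorem parabolic_approximation [Group G] [Countable G]
    (d : G → G → ℝ) (hd : IsPLIMetric d) (Ps : Set (Subgroup G))
    (hPs : Ps.Finite) (H : Subgroup G) (σ : ℝ) (hσ : 0 ≤ σ) :
    ∃ L : ℝ, 0 < L ∧ ∀ (h g p f : G) (P : Subgroup G), P ∈ Ps → h ∈ H →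
      h = g * p * f → d 1 g ≤ σ → d 1 f ≤ σ → p ∈ P →
      ∃ a b : G, h = a * b ∧ a ∈ H ⊓ conjSub g P ∧ b ∈ H ∧ d 1 b ≤ L := by
  classical
  -- the set of relevant triples
  set S : Set (G × G × Subgroup G) :=
    {t | d 1 t.1 ≤ σ ∧ d 1 t.2.1 ≤ σ ∧ t.2.2 ∈ Ps} with hSdef
  have hSfin : S.Finite := by
    have : S ⊆ {y : G | d 1 y ≤ σ} ×ˢ ({y : G | d 1 y ≤ σ} ×ˢ Ps) := by
      rintro ⟨g, f, P⟩ ⟨h1, h2, h3⟩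
      exact ⟨h1, h2, h3⟩
    exact Set.Finite.subset ((hd.proper 1 σ).prod ((hd.proper 1 σ).prod hPs)) this
  -- a choice of a minimal-ish representative for each triple
  let val : G × G × Subgroup G → ℝ := fun t =>
    if hex : ∃ x : G, x ∈ H ∧ ∃ p ∈ t.2.2, x = t.1 * p * t.2.1 then
      d 1 hex.choose else 0
  obtain ⟨M, hM⟩ : BddAbove (val '' S) := (hSfin.image val).bddAbove
  refine ⟨max M 0 + 1, by positivity, ?_⟩
  intro h g p f P hPmem hH heq hg hf hp
  have htS : (g, f, P) ∈ S := ⟨hg, hf, hPmem⟩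
  have hex : ∃ x : G, x ∈ H ∧ ∃ p ∈ (g, f, P).2.2, x = (g, f, P).1 * p * (g, f, P).2.1 :=
    ⟨h, hH, p, hp, heq⟩
  obtain ⟨h₀H, p₀, hp₀, h₀eq⟩ := hex.choose_spec
  set h₀ := hex.choose with hh₀
  refine ⟨h * h₀⁻¹, h₀, by group, ⟨H.mul_mem hH (H.inv_mem h₀H), ?_⟩, h₀H, ?_⟩
  · refine ⟨p * p₀⁻¹, mul_mem hp (inv_mem hp₀), ?_⟩
    simp only [MulEquiv.toMonoidHom_eq_coe, MonoidHom.coe_coe, MulAut.conj_apply]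
    rw [heq, h₀eq]
    group
  · have hval : val (g, f, P) = d 1 h₀ := dif_pos hex
    have : val (g, f, P) ≤ M := hM ⟨(g, f, P), htS, rfl⟩
    rw [hval] at this
    calc d 1 h₀ ≤ M := this
      _ ≤ max M 0 := le_max_left _ _
      _ ≤ max M 0 + 1 := by linarith
end

section
/- Let G be a countable group hyperbolic relative to a finite collection P, with finite relative generating set S and proper left-invariant metric d. Suppose H ≤ G is relatively quasiconvex in the sense of Osin's definition (Q̄-1) with constant σ: every vertex on any geodesic in the Cayley graph Γ̄(G, S ∪ P) between two elements of H lies within d-distance σ of H. Then H is finitely generated relative to the finite collection of subgroups R = { H ∩ gPg⁻¹ : g ∈ G, d(1,g) ≤ σ, P ∈ P }. -/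
open SimpleGraph

universe u v

variable {V : Type u} {G : Type v}

/-- The Cayley graph `Γ̄(G, S ∪ Ps)` of `G` with respect to the generating set
`S ∪ ⋃_{P ∈ Ps} P`. -/
def relCayley [Group G] (Ps : Set (Subgroup G)) (S : Set G) : SimpleGraph G :=
  SimpleGraph.fromRel (fun a b => a⁻¹ * b ∈ S ∪ ⋃ P ∈ Ps, ((P : Subgroup G) : Set G))


/-- Left multiplication as a graph homomorphism of `relCayley`. -/
def relCayleyMulHom [Group G] (Ps : Set (Subgroup G)) (S : Set G) (c : G) :
    relCayley Ps S →g relCayley Ps S where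
  toFun := fun x => c * x
  map_rel' := by
    intro a b hab
    rw [relCayley, SimpleGraph.fromRel_adj] at hab ⊢
    refine ⟨fun h => hab.1 (mul_left_cancel h), ?_⟩
    have h1 : (c * a)⁻¹ * (c * b) = a⁻¹ * b := by group
    have h2 : (c * b)⁻¹ * (c * a) = b⁻¹ * a := by group
    rw [h1, h2]
    exact hab.2

lemma relCayley_reachable [Group G] (Ps : Set (Subgroup G)) (S : Set G)
    (hSgen : Subgroup.closure (S ∪ ⋃ P ∈ Ps, ((P : Subgroup G) : Set G)) = ⊤) (g : G) :
    (relCayley Ps S).Reachable 1 g := by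
  let K : Subgroup G :=
  { carrier := {g : G | (relCayley Ps S).Reachable 1 g}
    one_mem' := Reachable.refl 1
    mul_mem' := by
      intro x y hx hy
      have h : (relCayley Ps S).Reachable (x * 1) (x * y) :=
        Reachable.map (relCayleyMulHom Ps S x) hy
      rw [mul_one] at h
      exact Reachable.trans hx h
    inv_mem' := by
      intro x hx
      have h : (relCayley Ps S).Reachable (x⁻¹ * 1) (x⁻¹ * x) :=
        Reachable.map (relCayleyMulHom Ps S x⁻¹) hx
      rw [mul_one, inv_mul_cancel] at h
      exact h.symm }
  have hsub : S ∪ ⋃ P ∈ Ps, ((P : Subgroup G) : Set G) ⊆ (K : Set G) := by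
    intro s hs
    by_cases h1 : s = (1 : G)
    · subst h1; exact one_mem K
    · have hadj : (relCayley Ps S).Adj 1 s := by
        rw [relCayley, SimpleGraph.fromRel_adj]
        refine ⟨fun h => h1 h.symm, Or.inl ?_⟩
        simpa using hs
      exact hadj.reachable
  have hle : Subgroup.closure (S ∪ ⋃ P ∈ Ps, ((P : Subgroup G) : Set G)) ≤ K :=
    (Subgroup.closure_le K).mpr hsub
  rw [hSgen] at hle
  exact hle (Subgroup.mem_top g)

open scoped Classical

/-- A choice of an element of `H ∩ a P b⁻¹` when one exists. -/
noncomputable def repFun [Group G] (H : Subgroup G) (t : G × G × Subgroup G) : G :=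
  if h : ∃ c, c ∈ H ∧ ∃ p ∈ t.2.2, c = t.1 * p * t.2.1⁻¹ then h.choose else 1

lemma repFun_mem [Group G] (H : Subgroup G) (t : G × G × Subgroup G) : repFun H t ∈ H := by
  unfold repFun
  split
  next h => exact h.choose_spec.1
  next => exact one_mem H

lemma repFun_spec [Group G] (H : Subgroup G) (t : G × G × Subgroup G)
    (h : ∃ c, c ∈ H ∧ ∃ p ∈ t.2.2, c = t.1 * p * t.2.1⁻¹) :
    ∃ p ∈ t.2.2, repFun H t = t.1 * p * t.2.1⁻¹ := by
  unfold repFun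
  rw [dif_pos h]
  exact h.choose_spec.2

/-- An Osin relatively quasiconvex subgroup (Q̄-1) of a countable relatively
hyperbolic group is finitely generated relative to the finite collection of
subgroups `H ∩ gPg⁻¹` with `d(1,g) ≤ σ` and `P ∈ Ps`. -/
theorem osin_quasiconvex_implies_finite_relative_generation
    [Group G] [Countable G] (Ps : Set (Subgroup G)) (hPs : Ps.Finite)
    (V₀ : Type u) (φ : G →* Equiv.Perm V₀) (K : SimpleGraph V₀)
    (hK : IsGPGraph φ Ps K)
    (S : Set G) (hSfin : S.Finite)
    (hSgen : Subgroup.closure (S ∪ ⋃ P ∈ Ps, ((P : Subgroup G) : Set G)) = ⊤)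
    (d : G → G → ℝ) (hd : IsPLIMetric d)
    (H : Subgroup G) (σ : ℝ) (hσ : 0 ≤ σ)
    (hqc : ∀ f g : G, f ∈ H → g ∈ H → ∀ W : (relCayley Ps S).Walk f g,
      W.length = (relCayley Ps S).dist f g →
      ∀ p ∈ W.support, ∃ h ∈ H, d p h ≤ σ) :
    ∃ T : Set G, T.Finite ∧ T ⊆ (H : Set G) ∧
      Subgroup.closure
        (T ∪ ⋃ g ∈ {g : G | d 1 g ≤ σ}, ⋃ P ∈ Ps,
          ((H ⊓ conjSub g P : Subgroup G) : Set G)) = H := by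

  classical
  set B := {g : G | d 1 g ≤ σ} with hBdef
  have hB : B.Finite := hd.proper 1 σ
  have hS' : (S ∪ S⁻¹ ∪ {1} : Set G).Finite :=
    (hSfin.union hSfin.inv).union (Set.finite_singleton 1)
  set T₁ : Set G := (H : Set G) ∩
    ((fun x : G × G × G => x.1 * x.2.1 * x.2.2⁻¹) ''
      (B ×ˢ ((S ∪ S⁻¹ ∪ {1}) ×ˢ B))) with hT₁def
  have hT₁fin : T₁.Finite :=
    Set.Finite.inter_of_right ((hB.prod (hS'.prod hB)).image _) _
  set T₂ : Set G := repFun H '' (B ×ˢ (B ×ˢ Ps)) with hT₂def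
  have hT₂fin : T₂.Finite := (hB.prod (hB.prod hPs)).image _
  have hTH : T₁ ∪ T₂ ⊆ (H : Set G) := by
    rintro x (hx | hx)
    · exact hx.1
    · obtain ⟨t, -, rfl⟩ := hx
      exact repFun_mem H t
  refine ⟨T₁ ∪ T₂, hT₁fin.union hT₂fin, hTH, ?_⟩
  set Gens := (T₁ ∪ T₂) ∪ ⋃ g ∈ B, ⋃ P ∈ Ps,
      ((H ⊓ conjSub g P : Subgroup G) : Set G) with hGensdef
  apply le_antisymm
  · rw [Subgroup.closure_le]
    rintro x (hx | hx)
    · exact hTH hx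
    · simp only [Set.mem_iUnion, SetLike.mem_coe, Subgroup.mem_inf] at hx
      obtain ⟨g, -, P, -, hxH, -⟩ := hx
      exact hxH
  · intro h hh
    have step : ∀ u w : G, ((relCayley Ps S).Adj u w ∨ u = w) →
        ∀ hu hw : G, hu ∈ H → hw ∈ H → d u hu ≤ σ → d w hw ≤ σ →
        hu⁻¹ * hw ∈ Subgroup.closure Gens := by
      intro u w hcase hu hw hhu hhw hdu hdw
      have ha : hu⁻¹ * u ∈ B := by
        show d 1 (hu⁻¹ * u) ≤ σ
        calc d 1 (hu⁻¹ * u) = d (hu⁻¹ * hu) (hu⁻¹ * u) := by rw [inv_mul_cancel]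
          _ = d hu u := hd.left_inv _ _ _
          _ = d u hu := hd.symm _ _
          _ ≤ σ := hdu
      have hb : hw⁻¹ * w ∈ B := by
        show d 1 (hw⁻¹ * w) ≤ σ
        calc d 1 (hw⁻¹ * w) = d (hw⁻¹ * hw) (hw⁻¹ * w) := by rw [inv_mul_cancel]
          _ = d hw w := hd.left_inv _ _ _
          _ = d w hw := hd.symm _ _
          _ ≤ σ := hdw
      have hcH : hu⁻¹ * hw ∈ H := mul_mem (inv_mem hhu) hhw
      have hT₁case : ∀ s ∈ (S ∪ S⁻¹ ∪ {1} : Set G),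
          hu⁻¹ * hw = (hu⁻¹ * u) * s * (hw⁻¹ * w)⁻¹ →
          hu⁻¹ * hw ∈ Subgroup.closure Gens := by
        intro s hs heq
        apply Subgroup.subset_closure
        exact Or.inl (Or.inl ⟨hcH, ⟨(hu⁻¹ * u, s, hw⁻¹ * w), ⟨ha, hs, hb⟩, heq.symm⟩⟩)
      rcases hcase with hadj | rfl
      · have hceq : hu⁻¹ * hw = (hu⁻¹ * u) * (u⁻¹ * w) * (hw⁻¹ * w)⁻¹ := by group
        rw [relCayley, SimpleGraph.fromRel_adj] at hadj
        obtain ⟨-, hor⟩ := hadj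
        have hS1 : (u⁻¹ * w ∈ S ∪ S⁻¹ ∪ {1}) ∨ ∃ P ∈ Ps, u⁻¹ * w ∈ P := by
          rcases hor with hm | hm
          · rcases hm with hmS | hmP
            · exact Or.inl (Or.inl (Or.inl hmS))
            · simp only [Set.mem_iUnion, SetLike.mem_coe, exists_prop] at hmP
              exact Or.inr hmP
          · rcases hm with hmS | hmP
            · refine Or.inl (Or.inl (Or.inr ?_))
              rw [Set.mem_inv, show (u⁻¹ * w)⁻¹ = w⁻¹ * u by group]
              exact hmS
            · simp only [Set.mem_iUnion, SetLike.mem_coe, exists_prop] at hmP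
              obtain ⟨P, hP, hp⟩ := hmP
              refine Or.inr ⟨P, hP, ?_⟩
              have := inv_mem hp
              rwa [show (w⁻¹ * u)⁻¹ = u⁻¹ * w by group] at this
        rcases hS1 with hs | ⟨P, hP, hp⟩
        · exact hT₁case _ hs hceq
        · have hex : ∃ c, c ∈ H ∧
              ∃ p ∈ ((hu⁻¹ * u, hw⁻¹ * w, P) : G × G × Subgroup G).2.2,
                c = (hu⁻¹ * u) * p * (hw⁻¹ * w)⁻¹ :=
            ⟨hu⁻¹ * hw, hcH, u⁻¹ * w, hp, hceq⟩
          obtain ⟨q, hq, hreq⟩ := repFun_spec H _ hex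
          set r := repFun H (hu⁻¹ * u, hw⁻¹ * w, P) with hrdef
          have hrT : r ∈ Subgroup.closure Gens := by
            apply Subgroup.subset_closure
            exact Or.inl (Or.inr ⟨(hu⁻¹ * u, hw⁻¹ * w, P), ⟨ha, hb, hP⟩, rfl⟩)
          have hsub : r⁻¹ * (hu⁻¹ * hw) ∈ Subgroup.closure Gens := by
            apply Subgroup.subset_closure
            refine Or.inr (Set.mem_biUnion hb (Set.mem_biUnion hP ?_))
            rw [SetLike.mem_coe, Subgroup.mem_inf]
            refine ⟨mul_mem (inv_mem (repFun_mem H _)) hcH, ?_⟩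
            rw [conjSub, Subgroup.mem_map]
            refine ⟨q⁻¹ * (u⁻¹ * w), mul_mem (inv_mem hq) hp, ?_⟩
            simp only [MulEquiv.coe_toMonoidHom, MulAut.conj_apply]
            rw [hreq, hceq]
            group
          have hfin := mul_mem hrT hsub
          rwa [show r * (r⁻¹ * (hu⁻¹ * hw)) = hu⁻¹ * hw by group] at hfin
      · refine hT₁case 1 (Or.inr rfl) ?_
        group
    have key : ∀ (u v : G) (W : (relCayley Ps S).Walk u v),
        (∀ p ∈ W.support, ∃ h' ∈ H, d p h' ≤ σ) →
        ∀ hu hv : G, hu ∈ H → hv ∈ H → d u hu ≤ σ → d v hv ≤ σ →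
        hu⁻¹ * hv ∈ Subgroup.closure Gens := by
      intro u v W
      induction W with
      | nil =>
        intro _ hu hv h1 h2 h3 h4
        exact step _ _ (Or.inr rfl) hu hv h1 h2 h3 h4
      | @cons u w v hadj W' ih =>
        intro hsup hu hv hhu hhv hdu hdv
        obtain ⟨hw, hhw, hdw⟩ := hsup w
          (by rw [Walk.support_cons]; exact List.mem_cons_of_mem _ W'.start_mem_support)
        have h1 := step u w (Or.inl hadj) hu hw hhu hhw hdu hdw
        have h2 := ih
          (fun p hp => hsup p (by rw [Walk.support_cons]; exact List.mem_cons_of_mem _ hp))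
          hw hv hhw hhv hdw hdv
        have hfin := mul_mem h1 h2
        rwa [show (hu⁻¹ * hw) * (hw⁻¹ * hv) = hu⁻¹ * hv by group] at hfin
    obtain ⟨W, hW⟩ := (relCayley_reachable Ps S hSgen h).exists_walk_length_eq_dist
    have hsup := hqc 1 h (one_mem H) hh W hW
    have hans := key 1 h W hsup 1 h (one_mem H) hh
      (by rw [hd.refl]; exact hσ) (by rw [hd.refl]; exact hσ)
    rwa [inv_one, one_mul] at hans
end
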